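/- arXiv:2308.10981 — 4 statements merged into one kernel-verified Lean document; each statement's English description precedes it below -/
import Mathlib

section
/- Let (B, *_λ, α, β) be a regular multiplicative commutative BiHom-associative conformal algebra. Define the λ-bracket [x_λ y] = x *_λ y − α⁻¹β(y) *_{−∂−λ} αβ⁻¹(x). Then (B, *_λ, [·_λ·], α, β) is a BiHom-Poisson conformal algebra. -/
/-!
Common framework: conformal λ-maps over ℂ[∂]-modules, recorded by the
coefficients of their λ-expansion, together with evaluation at a complex
number λ and "evaluation at −∂−λ".
-/

namespace ConfAlg

/-- A conformal λ-map from `B` to conformal operators on `M`: the value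
`x *_λ m` is the polynomial `∑ₙ λⁿ • (coef n)` recorded as a finitely
supported family of coefficients, ℂ-bilinear in `x` and `m`. -/
abbrev CMap (B M : Type) [AddCommGroup B] [Module ℂ B]
    [AddCommGroup M] [Module ℂ M] :=
  B →ₗ[ℂ] M →ₗ[ℂ] (ℕ →₀ M)

section Defs

variable {B M : Type} [AddCommGroup B] [Module ℂ B] [AddCommGroup M] [Module ℂ M]

/-- Evaluation of a conformal λ-map at a complex number `l`. -/
noncomputable def ev (f : CMap B M) (l : ℂ) (x : B) (m : M) : M :=
  (f x m).sum fun n b => l ^ n • b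

/-- Evaluation of a conformal λ-map at `−∂−l`: the operator `(−∂−l)ⁿ`
is applied to the `n`-th coefficient, where `∂` acts on `M` via `DM`. -/
noncomputable def evD (DM : Module.End ℂ M) (f : CMap B M) (l : ℂ) (x : B) (m : M) : M :=
  (f x m).sum fun n b => ((-DM - l • (1 : Module.End ℂ M)) ^ n) b

/-- Conformal sesquilinearity: `(∂x)_λ m = −λ (x_λ m)` and
`x_λ (∂m) = (∂+λ)(x_λ m)`. -/
def Sesq (D : Module.End ℂ B) (DM : Module.End ℂ M) (f : CMap B M) : Prop :=
  (∀ (l : ℂ) (x : B) (m : M), ev f l (D x) m = (-l) • ev f l x m) ∧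
  (∀ (l : ℂ) (x : B) (m : M), ev f l x (DM m) = DM (ev f l x m) + l • ev f l x m)

end Defs

/-- The data of a (BiHom-associative) conformal algebra: the action of `∂`,
a conformal λ-product, and two structure maps. -/
structure AssocData (B : Type) [AddCommGroup B] [Module ℂ B] where
  D : Module.End ℂ B
  mul : CMap B B
  α : Module.End ℂ B
  β : Module.End ℂ B

namespace AssocData

variable {B : Type} [AddCommGroup B] [Module ℂ B]

/-- `(B, *_λ, α, β)` is a BiHom-associative conformal algebra. -/
def IsAssoc (A : AssocData B) : Prop :=
  A.α ∘ₗ A.D = A.D ∘ₗ A.α ∧ A.β ∘ₗ A.D = A.D ∘ₗ A.β ∧ A.α ∘ₗ A.β = A.β ∘ₗ A.α ∧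
  Sesq A.D A.D A.mul ∧
  ∀ (l μ : ℂ) (x y z : B),
    ev A.mul l (A.α x) (ev A.mul μ y z) = ev A.mul (l + μ) (ev A.mul l x y) (A.β z)

/-- Commutativity: `x *_λ y = y *_{−∂−λ} x`. -/
def IsComm (A : AssocData B) : Prop :=
  ∀ (l : ℂ) (x y : B), ev A.mul l x y = evD A.D A.mul l y x

/-- Multiplicativity of the structure maps. -/
def IsMult (A : AssocData B) : Prop :=
  (∀ (l : ℂ) (x y : B), A.α (ev A.mul l x y) = ev A.mul l (A.α x) (A.α y)) ∧
  (∀ (l : ℂ) (x y : B), A.β (ev A.mul l x y) = ev A.mul l (A.β x) (A.β y))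

end AssocData

/-- The data of a (BiHom-Lie) conformal algebra. -/
structure LieData (B : Type) [AddCommGroup B] [Module ℂ B] where
  D : Module.End ℂ B
  br : CMap B B
  α : Module.End ℂ B
  β : Module.End ℂ B

namespace LieData

variable {B : Type} [AddCommGroup B] [Module ℂ B]

/-- `(B, [·_λ·], α, β)` is a BiHom-Lie conformal algebra. -/
def IsLie (L : LieData B) : Prop :=
  L.α ∘ₗ L.D = L.D ∘ₗ L.α ∧ L.β ∘ₗ L.D = L.D ∘ₗ L.β ∧ L.α ∘ₗ L.β = L.β ∘ₗ L.α ∧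
  Sesq L.D L.D L.br ∧
  (∀ (l : ℂ) (x y : B),
    ev L.br l (L.β x) (L.α y) = - evD L.D L.br l (L.β y) (L.α x)) ∧
  ∀ (l μ : ℂ) (x y z : B),
    ev L.br l (L.α (L.β x)) (ev L.br μ y z)
      = ev L.br (l + μ) (ev L.br l (L.β x) y) (L.β z)
        + ev L.br μ (L.β y) (ev L.br l (L.α x) z)

/-- Multiplicativity of the structure maps. -/
def IsMult (L : LieData B) : Prop :=
  (∀ (l : ℂ) (x y : B), L.α (ev L.br l x y) = ev L.br l (L.α x) (L.α y)) ∧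
  (∀ (l : ℂ) (x y : B), L.β (ev L.br l x y) = ev L.br l (L.β x) (L.β y))

end LieData

/-- The data of a (BiHom-)Poisson conformal algebra. -/
structure PoissonData (B : Type) [AddCommGroup B] [Module ℂ B] where
  D : Module.End ℂ B
  mul : CMap B B
  br : CMap B B
  α : Module.End ℂ B
  β : Module.End ℂ B

namespace PoissonData

variable {B : Type} [AddCommGroup B] [Module ℂ B]

def toAssoc (P : PoissonData B) : AssocData B := ⟨P.D, P.mul, P.α, P.β⟩

def toLie (P : PoissonData B) : LieData B := ⟨P.D, P.br, P.α, P.β⟩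

/-- The BiHom-Leibniz identity
`[αβ(x)_λ (y *_μ z)] = [β(x)_λ y] *_{λ+μ} β(z) + β(y) *_μ [α(x)_λ z]`. -/
def Leibniz (P : PoissonData B) : Prop :=
  ∀ (l μ : ℂ) (x y z : B),
    ev P.br l (P.α (P.β x)) (ev P.mul μ y z)
      = ev P.mul (l + μ) (ev P.br l (P.β x) y) (P.β z)
        + ev P.mul μ (P.β y) (ev P.br l (P.α x) z)

/-- `(B, *_λ, [·_λ·], α, β)` is a BiHom-Poisson conformal algebra. -/
def IsPoisson (P : PoissonData B) : Prop :=
  P.toAssoc.IsAssoc ∧ P.toAssoc.IsComm ∧ P.toLie.IsLie ∧ P.Leibniz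

/-- A noncommutative BiHom-Poisson conformal algebra (commutativity of `*_λ`
is not required). -/
def IsNCPoisson (P : PoissonData B) : Prop :=
  P.toAssoc.IsAssoc ∧ P.toLie.IsLie ∧ P.Leibniz

/-- Multiplicativity of the structure maps with respect to both products. -/
def IsMult (P : PoissonData B) : Prop :=
  P.toAssoc.IsMult ∧ P.toLie.IsMult

end PoissonData

/-- The data of a BiHom-dendriform conformal algebra; `lt` is `≺`, `gt` is `≻`. -/
structure DendData (B : Type) [AddCommGroup B] [Module ℂ B] where
  D : Module.End ℂ B
  lt : CMap B B
  gt : CMap B B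
  α : Module.End ℂ B
  β : Module.End ℂ B

namespace DendData

variable {B : Type} [AddCommGroup B] [Module ℂ B]

/-- `(B, ≺_λ, ≻_λ, α, β)` is a BiHom-dendriform conformal algebra. -/
def IsDend (Dd : DendData B) : Prop :=
  Dd.α ∘ₗ Dd.D = Dd.D ∘ₗ Dd.α ∧ Dd.β ∘ₗ Dd.D = Dd.D ∘ₗ Dd.β ∧
  Dd.α ∘ₗ Dd.β = Dd.β ∘ₗ Dd.α ∧
  Sesq Dd.D Dd.D Dd.lt ∧ Sesq Dd.D Dd.D Dd.gt ∧
  (∀ (l : ℂ) (x y : B), Dd.α (ev Dd.lt l x y) = ev Dd.lt l (Dd.α x) (Dd.α y)) ∧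
  (∀ (l : ℂ) (x y : B), Dd.α (ev Dd.gt l x y) = ev Dd.gt l (Dd.α x) (Dd.α y)) ∧
  (∀ (l : ℂ) (x y : B), Dd.β (ev Dd.lt l x y) = ev Dd.lt l (Dd.β x) (Dd.β y)) ∧
  (∀ (l : ℂ) (x y : B), Dd.β (ev Dd.gt l x y) = ev Dd.gt l (Dd.β x) (Dd.β y)) ∧
  (∀ (l μ : ℂ) (x y z : B),
    ev Dd.lt (l + μ) (ev Dd.lt l x y) (Dd.β z)
      = ev Dd.lt l (Dd.α x) (ev Dd.lt μ y z + ev Dd.gt μ y z)) ∧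
  (∀ (l μ : ℂ) (x y z : B),
    ev Dd.lt (l + μ) (ev Dd.gt l x y) (Dd.β z)
      = ev Dd.gt l (Dd.α x) (ev Dd.lt μ y z)) ∧
  ∀ (l μ : ℂ) (x y z : B),
    ev Dd.gt l (Dd.α x) (ev Dd.gt μ y z)
      = ev Dd.gt (l + μ) (ev Dd.lt l x y + ev Dd.gt l x y) (Dd.β z)

end DendData

/-- The data of a BiHom-preLie conformal algebra. -/
structure PreLieData (B : Type) [AddCommGroup B] [Module ℂ B] where
  D : Module.End ℂ B
  mul : CMap B B
  α : Module.End ℂ B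
  β : Module.End ℂ B

namespace PreLieData

variable {B : Type} [AddCommGroup B] [Module ℂ B]

/-- `(B, *_λ, α, β)` is a BiHom-preLie conformal algebra. -/
def IsPreLie (P : PreLieData B) : Prop :=
  P.α ∘ₗ P.D = P.D ∘ₗ P.α ∧ P.β ∘ₗ P.D = P.D ∘ₗ P.β ∧ P.α ∘ₗ P.β = P.β ∘ₗ P.α ∧
  Sesq P.D P.D P.mul ∧
  (∀ (l : ℂ) (x y : B), P.α (ev P.mul l x y) = ev P.mul l (P.α x) (P.α y)) ∧
  (∀ (l : ℂ) (x y : B), P.β (ev P.mul l x y) = ev P.mul l (P.β x) (P.β y)) ∧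
  ∀ (l μ : ℂ) (x y z : B),
    ev P.mul (l + μ) (ev P.mul l (P.β x) (P.α y)) (P.β z)
        - ev P.mul l (P.α (P.β x)) (ev P.mul μ (P.α y) z)
      = ev P.mul (l + μ) (ev P.mul μ (P.β y) (P.α x)) (P.β z)
        - ev P.mul μ (P.α (P.β y)) (ev P.mul l (P.α x) z)

end PreLieData

/-- The data of a BiHom-pre-Poisson conformal algebra. -/
structure PrePoissonData (B : Type) [AddCommGroup B] [Module ℂ B] where
  D : Module.End ℂ B
  lt : CMap B B
  gt : CMap B B
  star : CMap B B
  α : Module.End ℂ B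
  β : Module.End ℂ B

namespace PrePoissonData

variable {B : Type} [AddCommGroup B] [Module ℂ B]

def toDend (P : PrePoissonData B) : DendData B := ⟨P.D, P.lt, P.gt, P.α, P.β⟩

def toPreLie (P : PrePoissonData B) : PreLieData B := ⟨P.D, P.star, P.α, P.β⟩

/-- `(B, ≺_λ, ≻_λ, *_λ, α, β)` is a BiHom-pre-Poisson conformal algebra. -/
def IsPrePoisson (P : PrePoissonData B) : Prop :=
  P.toDend.IsDend ∧ P.toPreLie.IsPreLie ∧
  (∀ (l μ : ℂ) (x y z : B),
    ev P.lt (l + μ)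
        (ev P.star l (P.β x) (P.α y) - evD P.D P.star l (P.β y) (P.α x)) (P.β z)
      = ev P.star l (P.α (P.β x)) (ev P.lt μ (P.α y) z)
        - ev P.lt μ (P.α (P.β y)) (ev P.star l (P.α x) z)) ∧
  (∀ (l μ : ℂ) (x y z : B),
    ev P.gt l (P.β x)
        (ev P.star μ (P.α (P.β y)) (P.α z) - evD P.D P.star μ (P.β z) (P.α (P.α y)))
      = ev P.star μ (P.α (P.β (P.β y))) (ev P.gt l x (P.α z))
        - ev P.gt (l + μ) (ev P.star μ (P.β (P.β y)) x) (P.α (P.β z))) ∧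
  ∀ (l μ : ℂ) (x y z : B),
    ev P.star (l + μ) (ev P.lt l (P.β x) (P.α y) + ev P.gt l (P.β x) (P.α y)) (P.β z)
      = evD P.D P.gt μ (ev P.star l (P.β x) (P.α z)) (P.β y)
        + ev P.lt l (P.α (P.β x)) (ev P.star μ (P.α y) z)

end PrePoissonData

section Reps

variable {B M : Type} [AddCommGroup B] [Module ℂ B] [AddCommGroup M] [Module ℂ M]

/-- `(M, l, r, φ, ψ)` is a conformal representation of the BiHom-associative
conformal algebra `A`. -/
def IsAssocRep (A : AssocData B) (DM φ ψ : Module.End ℂ M) (lA rA : CMap B M) : Prop :=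
  φ ∘ₗ DM = DM ∘ₗ φ ∧ ψ ∘ₗ DM = DM ∘ₗ ψ ∧
  Sesq A.D DM lA ∧ Sesq A.D DM rA ∧
  (∀ (l : ℂ) (x : B) (m : M), φ (ev lA l x m) = ev lA l (A.α x) (φ m)) ∧
  (∀ (l : ℂ) (x : B) (m : M), φ (ev rA l x m) = ev rA l (A.α x) (φ m)) ∧
  (∀ (l : ℂ) (x : B) (m : M), ψ (ev lA l x m) = ev lA l (A.β x) (ψ m)) ∧
  (∀ (l : ℂ) (x : B) (m : M), ψ (ev rA l x m) = ev rA l (A.β x) (ψ m)) ∧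
  (∀ (l μ : ℂ) (x y : B) (m : M),
    ev lA (l + μ) (ev A.mul l x y) (ψ m) = ev lA l (A.α x) (ev lA μ y m)) ∧
  (∀ (l μ : ℂ) (x y : B) (m : M),
    ev rA (l + μ) (ev A.mul l x y) (φ m) = ev rA l (A.β y) (ev rA μ x m)) ∧
  ∀ (l μ : ℂ) (x y : B) (m : M),
    ev lA l (A.α x) (ev rA μ y m) = ev rA μ (A.β y) (ev lA l x m)

/-- `(M, ρ, φ, ψ)` is a conformal representation of the BiHom-Lie conformal
algebra `L`. -/
def IsLieRep (L : LieData B) (DM φ ψ : Module.End ℂ M) (ρ : CMap B M) : Prop :=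
  φ ∘ₗ DM = DM ∘ₗ φ ∧ ψ ∘ₗ DM = DM ∘ₗ ψ ∧
  Sesq L.D DM ρ ∧
  (∀ (l : ℂ) (x : B) (m : M), φ (ev ρ l x m) = ev ρ l (L.α x) (φ m)) ∧
  (∀ (l : ℂ) (x : B) (m : M), ψ (ev ρ l x m) = ev ρ l (L.β x) (ψ m)) ∧
  ∀ (l μ : ℂ) (x y : B) (m : M),
    ev ρ (l + μ) (ev L.br l (L.β x) y) (ψ m)
      = ev ρ l (L.α (L.β x)) (ev ρ μ y m) - ev ρ μ (L.β y) (ev ρ l (L.α x) m)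

/-- `(M, l, r, ρ, φ, ψ)` is a conformal representation of the BiHom-Poisson
conformal algebra `P`. -/
def IsPoissonRep (P : PoissonData B) (DM φ ψ : Module.End ℂ M)
    (lA rA ρ : CMap B M) : Prop :=
  IsAssocRep P.toAssoc DM φ ψ lA rA ∧ IsLieRep P.toLie DM φ ψ ρ ∧
  (∀ (l μ : ℂ) (x y : B) (m : M),
    ev lA (l + μ) (ev P.br l (P.β x) y) (ψ m)
      = ev ρ l (P.α (P.β x)) (ev lA μ y m) - ev lA μ (P.β y) (ev ρ l (P.α x) m)) ∧
  (∀ (l μ : ℂ) (x y : B) (m : M),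
    ev rA (l + μ) (ev P.br l (P.α x) y) (ψ m)
      = ev ρ l (P.α (P.β x)) (ev rA μ y m) - ev rA μ (P.β y) (ev ρ l (P.β x) m)) ∧
  ∀ (l μ : ℂ) (x y : B) (m : M),
    ev ρ (l + μ) (ev P.mul l x y) (φ (ψ m))
      = ev lA l (P.α x) (ev ρ μ y (φ m)) - ev lA μ (P.α y) (ev ρ l x (ψ m))

/-- `(M, l_*, r_*, φ, ψ)` is a conformal representation of the BiHom-preLie
conformal algebra `P`. -/
def IsPreLieRep (P : PreLieData B) (DM φ ψ : Module.End ℂ M)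
    (lS rS : CMap B M) : Prop :=
  φ ∘ₗ DM = DM ∘ₗ φ ∧ ψ ∘ₗ DM = DM ∘ₗ ψ ∧
  Sesq P.D DM lS ∧ Sesq P.D DM rS ∧
  (∀ (l : ℂ) (x : B) (m : M), φ (ev lS l x m) = ev lS l (P.α x) (φ m)) ∧
  (∀ (l : ℂ) (x : B) (m : M), φ (ev rS l x m) = ev rS l (P.α x) (φ m)) ∧
  (∀ (l : ℂ) (x : B) (m : M), ψ (ev lS l x m) = ev lS l (P.β x) (ψ m)) ∧
  (∀ (l : ℂ) (x : B) (m : M), ψ (ev rS l x m) = ev rS l (P.β x) (ψ m)) ∧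
  (∀ (l μ : ℂ) (x y : B) (m : M),
    ev lS (l + μ)
        (ev P.mul l (P.β x) (P.α y) - evD P.D P.mul l (P.β y) (P.α x)) (ψ m)
      = ev lS l (P.α (P.β x)) (ev lS μ (P.α y) m)
        - ev lS μ (P.α (P.β y)) (ev lS l (P.α x) m)) ∧
  ∀ (l μ : ℂ) (x y : B) (m : M),
    ev rS μ (P.β y) (ev lS l (P.β x) (φ m) - ev rS l (P.α x) (ψ m))
      = ev lS l (P.α (P.β x)) (ev rS μ y (φ m))
        - ev rS (l + μ) (ev P.mul l (P.α x) y) (φ (ψ m))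

end Reps

/-- A bundled ℂ[∂]-module (used to quantify over representation spaces). -/
structure RepModule where
  M : Type
  [grp : AddCommGroup M]
  [mod : Module ℂ M]

attribute [instance] RepModule.grp RepModule.mod

end ConfAlg

namespace ConfAlgAux

open ConfAlg

variable {B : Type} [AddCommGroup B] [Module ℂ B]

/-- Evaluation of a coefficient family at a scalar, as a linear map. -/
noncomputable def Sl (l : ℂ) : (ℕ →₀ B) →ₗ[ℂ] B :=
  Finsupp.lsum ℂ (fun n => l ^ n • (LinearMap.id : B →ₗ[ℂ] B))

/-- Evaluation of a coefficient family at an endomorphism, as a linear map. -/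
noncomputable def Ol (T : Module.End ℂ B) : (ℕ →₀ B) →ₗ[ℂ] B :=
  Finsupp.lsum ℂ (fun n => T ^ n)

lemma Sl_apply (l : ℂ) (c : ℕ →₀ B) : Sl l c = c.sum (fun n b => l ^ n • b) := by
  rw [Sl, Finsupp.lsum_apply]
  exact Finsupp.sum_congr (fun n _ => rfl)

lemma Ol_apply (T : Module.End ℂ B) (c : ℕ →₀ B) :
    Ol T c = c.sum (fun n b => (T ^ n) b) := by
  rw [Ol, Finsupp.lsum_apply]

lemma Sl_single (l : ℂ) (k : ℕ) (b : B) : Sl l (Finsupp.single k b) = l ^ k • b := by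
  rw [Sl_apply, Finsupp.sum_single_index]; simp

lemma Ol_single (T : Module.End ℂ B) (k : ℕ) (b : B) :
    Ol T (Finsupp.single k b) = (T ^ k) b := by
  rw [Ol_apply, Finsupp.sum_single_index]; simp

lemma Sl_eq_Ol (l : ℂ) (c : ℕ →₀ B) : Sl l c = Ol (l • 1) c := by
  rw [Sl_apply, Ol_apply]
  refine Finsupp.sum_congr (fun n _ => ?_)
  rw [smul_pow, one_pow]; rfl

/-- Polynomial extensionality: a coefficient family whose evaluation vanishes
at every complex number is zero. -/
lemma poly_ext (c : ℕ →₀ B) (h : ∀ l : ℂ, Sl l c = 0) : c = 0 := by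
  ext n
  rw [Finsupp.coe_zero, Pi.zero_apply]
  rw [← Module.forall_dual_apply_eq_zero_iff ℂ]
  intro φ
  set q : Polynomial ℂ := ⟨AddMonoidAlgebra.ofCoeff (c.mapRange φ (map_zero φ))⟩ with hq
  have hev : ∀ l : ℂ, q.eval l = 0 := by
    intro l
    have h2 : φ (Sl l c) = 0 := by rw [h l, map_zero]
    rw [Sl_apply, map_finsuppSum] at h2
    rw [Polynomial.eval_eq_sum, Polynomial.sum_def]
    have : q.support.sum (fun n => q.coeff n * l ^ n)
        = c.sum (fun n b => φ (l ^ n • b)) := by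
      rw [hq]
      show (c.mapRange φ (map_zero φ)).support.sum _ = _
      rw [show (c.mapRange φ (map_zero φ)).support.sum (fun n => q.coeff n * l ^ n)
          = (c.mapRange φ (map_zero φ)).sum (fun n a => a * l ^ n) from rfl]
      rw [Finsupp.sum_mapRange_index (by simp)]
      refine Finsupp.sum_congr (fun n _ => ?_)
      rw [map_smul, smul_eq_mul, mul_comm]
    rw [this, h2]
  have hq0 : q = 0 := Polynomial.funext (by simpa using hev)
  have : q.coeff n = φ (c n) := by rw [hq]; rfl
  rw [← this, hq0, Polynomial.coeff_zero]

lemma ext_of_Sl (c d : ℕ →₀ B) (h : ∀ l : ℂ, Sl l c = Sl l d) : c = d := by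
  have := poly_ext (c - d) (fun l => by rw [map_sub, h l, sub_self])
  exact sub_eq_zero.mp this

lemma binom_apply (T : Module.End ℂ B) (l : ℂ) (m : ℕ) (b : B) :
    ((l • (1 : Module.End ℂ B) + T) ^ m) b
      = ∑ k ∈ Finset.range (m + 1), ((m.choose k : ℂ) * l ^ (m - k)) • (T ^ k) b := by
  have hc : Commute T (l • (1 : Module.End ℂ B)) := (Commute.one_right T).smul_right l
  rw [add_comm, hc.add_pow m]
  rw [LinearMap.sum_apply]
  refine Finset.sum_congr rfl (fun k _ => ?_)
  rw [Module.End.mul_apply, Module.End.mul_apply, smul_pow, one_pow]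
  rw [Module.End.natCast_apply, LinearMap.smul_apply, Module.End.one_apply]
  rw [map_smul, map_nsmul, ← Nat.cast_smul_eq_nsmul ℂ, smul_smul, mul_comm]

lemma shift_Ol (d : ℕ →₀ B) (l : ℂ) :
    ∃ d' : ℕ →₀ B, ∀ T : Module.End ℂ B,
      Ol T d' = d.sum (fun m b => ((l • (1 : Module.End ℂ B) + T) ^ m) b) := by
  refine ⟨d.sum (fun m b => ∑ k ∈ Finset.range (m + 1),
    Finsupp.single k (((m.choose k : ℂ) * l ^ (m - k)) • b)), fun T => ?_⟩
  rw [map_finsuppSum]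
  refine Finsupp.sum_congr (fun m _ => ?_)
  rw [map_sum, binom_apply]
  refine Finset.sum_congr rfl (fun k _ => ?_)
  rw [Ol_single, map_smul]

/-- Substituting an endomorphism into a polynomial identity between
coefficient families. -/
lemma op_subst (c d : ℕ →₀ B) (l : ℂ)
    (h : ∀ ν : ℂ, Sl ν c = Sl (l + ν) d) (T : Module.End ℂ B) :
    Ol T c = Ol (l • 1 + T) d := by
  obtain ⟨d', hd'⟩ := shift_Ol d l
  have hSd' : ∀ ν : ℂ, Sl ν d' = Sl (l + ν) d := by
    intro ν
    rw [Sl_eq_Ol, hd' (ν • 1), Sl_eq_Ol, Ol_apply, ← add_smul]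
  have hcd : c = d' := ext_of_Sl _ _ (fun ν => (h ν).trans (hSd' ν).symm)
  rw [hcd, hd' T, Ol_apply]

lemma pow_push {C : Type} [AddCommGroup C] [Module ℂ C]
    (L : B →ₗ[ℂ] C) (P : Module.End ℂ B) (Qe : Module.End ℂ C)
    (h : ∀ w, L (P w) = Qe (L w)) :
    ∀ (n : ℕ) (w : B), L ((P ^ n) w) = (Qe ^ n) (L w) := by
  intro n
  induction n with
  | zero => intro w; simp
  | succ n ih =>
      intro w
      rw [pow_succ', pow_succ', Module.End.mul_apply, Module.End.mul_apply, h, ih]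

lemma pow_push_smul {C : Type} [AddCommGroup C] [Module ℂ C]
    (L : B →ₗ[ℂ] C) (P : Module.End ℂ B) (c : ℂ)
    (h : ∀ w, L (P w) = c • L w) :
    ∀ (n : ℕ) (w : B), L ((P ^ n) w) = c ^ n • L w := by
  intro n
  induction n with
  | zero => intro w; simp
  | succ n ih =>
      intro w
      rw [pow_succ', Module.End.mul_apply, h, ih, smul_smul, ← pow_succ']

section Conf

lemma ev_Sl (f : CMap B B) (l : ℂ) (x m : B) : ev f l x m = Sl l (f x m) :=
  (Sl_apply l (f x m)).symm

lemma evD_Ol (D : Module.End ℂ B) (f : CMap B B) (l : ℂ) (x m : B) :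
    evD D f l x m = Ol (-D - l • 1) (f x m) :=
  (Ol_apply _ _).symm

lemma sub_one_apply (D : Module.End ℂ B) (l : ℂ) (w : B) :
    (-D - l • 1) w = -(D w) - l • w := by
  simp [LinearMap.sub_apply]

/-- Substitution `∂ ↦ -ν` in the first slot of an outer λ-product. -/
lemma lemA (D : Module.End ℂ B) (f g : CMap B B)
    (hs1 : ∀ (l : ℂ) (x m : B), ev f l (D x) m = (-l) • ev f l x m)
    (ν l : ℂ) (x y m : B) :
    ev f ν (evD D g l x y) m = ev f ν (ev g (ν - l) x y) m := by
  set L : B →ₗ[ℂ] B := (Sl ν).comp (f.flip m) with hLdef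
  have hLev : ∀ w, ev f ν w m = L w := fun w => by rw [ev_Sl]; rfl
  have hstep : ∀ w, L ((-D - l • 1) w) = (ν - l) • L w := by
    intro w
    have e1 : L (D w) = (-ν) • L w := by
      have := hs1 ν w m
      rwa [hLev, hLev] at this
    rw [sub_one_apply, map_sub, map_neg, map_smul, e1, sub_smul, neg_smul, neg_neg]
  rw [hLev, hLev, evD_Ol, Ol_apply, map_finsuppSum, ev_Sl, Sl_apply, map_finsuppSum]
  exact Finsupp.sum_congr
    (fun n _ => (pow_push_smul L _ _ hstep n _).trans (map_smul L _ _).symm)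

variable (A : AssocData B)
  (hassoc : ∀ (l μ : ℂ) (x y z : B),
    ev A.mul l (A.α x) (ev A.mul μ y z) = ev A.mul (l + μ) (ev A.mul l x y) (A.β z))
  (hs1 : ∀ (l : ℂ) (x m : B), ev A.mul l (A.D x) m = (-l) • ev A.mul l x m)
  (hs2 : ∀ (l : ℂ) (x m : B),
    ev A.mul l x (A.D m) = A.D (ev A.mul l x m) + l • ev A.mul l x m)
  (hComm : ∀ (l : ℂ) (x y : B), ev A.mul l x y = evD A.D A.mul l y x)

include hassoc hs1 hComm in
/-- Exchange identity `αx *_l (y *_μ z) = αy *_μ (x *_l z)` in a commutative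
BiHom-associative conformal algebra. -/
lemma exchE (l μ : ℂ) (x y z : B) :
    ev A.mul l (A.α x) (ev A.mul μ y z) = ev A.mul μ (A.α y) (ev A.mul l x z) := by
  rw [hassoc l μ x y z, hassoc μ l y x z, hComm l x y,
    lemA A.D A.mul A.mul hs1 (l + μ) l, add_sub_cancel_left, add_comm l μ]

include hassoc hs2 hComm in
/-- Exchange identity `αx *_l (y *_μ z) = βy *_μ (x *_l z)` in a commutative
BiHom-associative conformal algebra. -/
lemma exchF (l μ : ℂ) (x y z : B) :
    ev A.mul l (A.α x) (ev A.mul μ y z) = ev A.mul μ (A.β y) (ev A.mul l x z) := by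
  have hComm' : ∀ (l : ℂ) (u v : B), evD A.D A.mul l u v = ev A.mul l v u :=
    fun l u v => (hComm l v u).symm
  set L : B →ₗ[ℂ] B := (Sl l).comp (A.mul (A.α x)) with hLdef
  have hLev : ∀ w, ev A.mul l (A.α x) w = L w := fun w => by rw [ev_Sl]; rfl
  set T : Module.End ℂ B := -A.D - (l + μ) • 1 with hTdef
  have hstep : ∀ w, L ((-A.D - μ • 1) w) = T (L w) := by
    intro w
    have e1 : L (A.D w) = A.D (L w) + l • L w := by
      have := hs2 l (A.α x) w
      rwa [hLev, hLev] at this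
    rw [sub_one_apply, map_sub, map_neg, map_smul, e1, hTdef, sub_one_apply, add_smul]
    module
  set c' : ℕ →₀ B := Finsupp.mapRange L (map_zero L) (A.mul z y) with hc'def
  set d : ℕ →₀ B := A.mul (ev A.mul l x z) (A.β y) with hddef
  have hcalc : ev A.mul l (A.α x) (ev A.mul μ y z) = Ol T c' := by
    rw [hComm μ y z, hLev, evD_Ol, Ol_apply (-A.D - μ • 1), map_finsuppSum,
      hc'def, Ol_apply, Finsupp.sum_mapRange_index (by simp)]
    exact Finsupp.sum_congr (fun n _ => pow_push L _ _ hstep n _)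
  have hpoly : ∀ ν : ℂ, Sl ν c' = Sl (l + ν) d := by
    intro ν
    rw [hc'def, Sl_apply, Finsupp.sum_mapRange_index (by simp)]
    have h1 : (A.mul z y).sum (fun n b => ν ^ n • L b) = L (Sl ν (A.mul z y)) := by
      rw [Sl_apply, map_finsuppSum]
      exact Finsupp.sum_congr (fun n _ => (map_smul L _ _).symm)
    rw [h1, ← ev_Sl, ← hLev, hassoc l ν x z y, ev_Sl, hddef]
  have hop := op_subst c' d l hpoly T
  have hT : l • (1 : Module.End ℂ B) + T = -A.D - μ • 1 := by
    rw [hTdef, add_smul]; module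
  rw [hcalc, hop, hT, ← evD_Ol, hComm']

end Conf

end ConfAlgAux

open ConfAlg in
/-- a regular multiplicative commutative BiHom-associative
conformal algebra becomes a BiHom-Poisson conformal algebra under the
bracket `[x_λ y] = x *_λ y − α⁻¹β(y) *_{−∂−λ} αβ⁻¹(x)`. -/
theorem stmt2 {B : Type} [AddCommGroup B] [Module ℂ B]
    (A : AssocData B) (hA : A.IsAssoc) (hComm : A.IsComm) (hMult : A.IsMult)
    (α' β' : Module.End ℂ B)
    (hα1 : α' ∘ₗ A.α = 1) (hα2 : A.α ∘ₗ α' = 1)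
    (hβ1 : β' ∘ₗ A.β = 1) (hβ2 : A.β ∘ₗ β' = 1) :
    ∃ Q : CMap B B,
      (∀ (l : ℂ) (x y : B),
        ev Q l x y = ev A.mul l x y - evD A.D A.mul l (α' (A.β y)) (A.α (β' x))) ∧
      (PoissonData.mk A.D A.mul Q A.α A.β).IsPoisson := by
  obtain ⟨hαD, hβD, hαβc, hsesq, hassoc⟩ := hA
  obtain ⟨hs1, hs2⟩ := hsesq
  obtain ⟨hMα, hMβ⟩ := hMult
  -- element-level inverse and commutation facts
  have hαα' : ∀ t : B, A.α (α' t) = t := fun t => by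
    have := LinearMap.congr_fun hα2 t; simpa using this
  have hα'α : ∀ t : B, α' (A.α t) = t := fun t => by
    have := LinearMap.congr_fun hα1 t; simpa using this
  have hββ' : ∀ t : B, A.β (β' t) = t := fun t => by
    have := LinearMap.congr_fun hβ2 t; simpa using this
  have hβ'β : ∀ t : B, β' (A.β t) = t := fun t => by
    have := LinearMap.congr_fun hβ1 t; simpa using this
  have hαβ : ∀ t : B, A.α (A.β t) = A.β (A.α t) := fun t => by
    have := LinearMap.congr_fun hαβc t; simpa using this
  have hα'β : ∀ t : B, α' (A.β t) = A.β (α' t) := fun t => by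
    conv_lhs => rw [← hαα' t]
    rw [← hαβ, hα'α]
  have hβ'α : ∀ t : B, β' (A.α t) = A.α (β' t) := fun t => by
    conv_lhs => rw [← hββ' t]
    rw [hαβ, hβ'β]
  have hα'β' : ∀ t : B, α' (β' t) = β' (α' t) := fun t => by
    have h := hβ'α (α' t)
    rw [hαα'] at h
    have h2 := congrArg α' h
    rwa [hα'α] at h2
  have hDα : ∀ t : B, A.α (A.D t) = A.D (A.α t) := fun t => by
    have := LinearMap.congr_fun hαD t; simpa using this
  have hDβ : ∀ t : B, A.β (A.D t) = A.D (A.β t) := fun t => by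
    have := LinearMap.congr_fun hβD t; simpa using this
  have hα'D : ∀ t : B, α' (A.D t) = A.D (α' t) := fun t => by
    conv_lhs => rw [← hαα' t]
    rw [← hDα, hα'α]
  have hβ'D : ∀ t : B, β' (A.D t) = A.D (β' t) := fun t => by
    conv_lhs => rw [← hββ' t]
    rw [← hDβ, hβ'β]
  -- multiplicativity of the inverses
  have hMα' : ∀ (l : ℂ) (u v : B),
      α' (ev A.mul l u v) = ev A.mul l (α' u) (α' v) := fun l u v => by
    conv_lhs => rw [← hαα' u, ← hαα' v]
    rw [← hMα, hα'α]
  have hMβ' : ∀ (l : ℂ) (u v : B),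
      β' (ev A.mul l u v) = ev A.mul l (β' u) (β' v) := fun l u v => by
    conv_lhs => rw [← hββ' u, ← hββ' v]
    rw [← hMβ, hβ'β]
  have hMab : ∀ (l : ℂ) (u v : B), A.α (β' (ev A.mul l u v))
      = ev A.mul l (A.α (β' u)) (A.α (β' v)) := fun l u v => by
    rw [hMβ', hMα]
  have hMba : ∀ (l : ℂ) (u v : B), α' (A.β (ev A.mul l u v))
      = ev A.mul l (α' (A.β u)) (α' (A.β v)) := fun l u v => by
    rw [hMβ, hMα']
  -- the bracket
  set Q : CMap B B :=
    A.mul - ((A.mul ∘ₗ (A.α ∘ₗ β')).flip ∘ₗ (α' ∘ₗ A.β)).flip with hQdef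
  have hQ : ∀ x y : B, Q x y = A.mul x y - A.mul (A.α (β' x)) (α' (A.β y)) :=
    fun x y => rfl
  have hevQ : ∀ (l : ℂ) (x y : B), ev Q l x y
      = ev A.mul l x y - ev A.mul l (A.α (β' x)) (α' (A.β y)) := fun l x y => by
    rw [ConfAlgAux.ev_Sl Q, hQ, map_sub, ← ConfAlgAux.ev_Sl, ← ConfAlgAux.ev_Sl]
  have hComm' : ∀ (l : ℂ) (u v : B), evD A.D A.mul l u v = ev A.mul l v u :=
    fun l u v => (hComm l v u).symm
  have hevDQ : ∀ (l : ℂ) (x y : B), evD A.D Q l x y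
      = ev A.mul l y x - ev A.mul l (α' (A.β y)) (A.α (β' x)) := fun l x y => by
    rw [ConfAlgAux.evD_Ol A.D Q, hQ, map_sub, ← ConfAlgAux.evD_Ol, ← ConfAlgAux.evD_Ol,
      hComm', hComm']
  -- exchange identities
  have hE : ∀ (l μ : ℂ) (x y z : B), ev A.mul l (A.α x) (ev A.mul μ y z)
      = ev A.mul μ (A.α y) (ev A.mul l x z) :=
    ConfAlgAux.exchE A hassoc hs1 hComm
  have hF : ∀ (l μ : ℂ) (x y z : B), ev A.mul l (A.α x) (ev A.mul μ y z)
      = ev A.mul μ (A.β y) (ev A.mul l x z) :=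
    ConfAlgAux.exchF A hassoc hs2 hComm
  have hH : ∀ (l μ : ℂ) (a u w : B), ev A.mul l (A.β a) (ev A.mul μ u w)
      = ev A.mul l (A.α a) (ev A.mul μ u w) := fun l μ a u w => by
    rw [← hF μ l u a w, hE μ l u a w]
  have hG : ∀ (l μ : ℂ) (a u w : B), ev A.mul l (A.α a) (ev A.mul μ u w)
      = ev A.mul l (A.α a) (ev A.mul μ (α' (A.β u)) w) := fun l μ a u w => by
    rw [hF l μ a u w]
    conv_lhs => rw [show A.β u = A.α (α' (A.β u)) from (hαα' _).symm]
    rw [← hE l μ a (α' (A.β u)) w]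
  -- linearity of evaluation
  have evsub_l : ∀ (f : CMap B B) (l : ℂ) (u v m : B),
      ev f l (u - v) m = ev f l u m - ev f l v m := fun f l u v m => by
    rw [ConfAlgAux.ev_Sl f l (u - v) m, map_sub, LinearMap.sub_apply, map_sub,
      ← ConfAlgAux.ev_Sl, ← ConfAlgAux.ev_Sl]
  have evsub_r : ∀ (f : CMap B B) (l : ℂ) (u m m' : B),
      ev f l u (m - m') = ev f l u m - ev f l u m' := fun f l u m m' => by
    rw [ConfAlgAux.ev_Sl f l u (m - m'), map_sub, map_sub,
      ← ConfAlgAux.ev_Sl, ← ConfAlgAux.ev_Sl]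
  have hab_sub : ∀ u v : B, α' (A.β (u - v)) = α' (A.β u) - α' (A.β v) :=
    fun u v => by rw [map_sub, map_sub]
  have hab'_sub : ∀ u v : B, A.α (β' (u - v)) = A.α (β' u) - A.α (β' v) :=
    fun u v => by rw [map_sub, map_sub]
  refine ⟨Q, fun l x y => by rw [hevQ, hComm'], ?_, ?_, ?_, ?_⟩
  · -- BiHom-associative
    exact ⟨hαD, hβD, hαβc, ⟨hs1, hs2⟩, hassoc⟩
  · -- commutative
    exact hComm
  · -- BiHom-Lie
    refine ⟨hαD, hβD, hαβc, ⟨?_, ?_⟩, ?_, ?_⟩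
    · -- sesquilinearity, first half
      intro l x m
      show ev Q l (A.D x) m = (-l) • ev Q l x m
      have e : A.α (β' (A.D x)) = A.D (A.α (β' x)) := by rw [hβ'D, hDα]
      rw [hevQ l (A.D x) m, hevQ l x m, e, hs1, hs1, smul_sub]
    · -- sesquilinearity, second half
      intro l x m
      show ev Q l x (A.D m) = A.D (ev Q l x m) + l • ev Q l x m
      have e : α' (A.β (A.D m)) = A.D (α' (A.β m)) := by rw [hDβ, hα'D]
      rw [hevQ l x (A.D m), hevQ l x m, e, hs2, hs2, map_sub, smul_sub]
      abel
    · -- skew-symmetry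
      intro l x y
      show ev Q l (A.β x) (A.α y) = - evD A.D Q l (A.β y) (A.α x)
      have e1 : A.α (β' (A.β x)) = A.α x := by rw [hβ'β]
      have e2 : α' (A.β (A.α y)) = A.β y := by rw [← hαβ, hα'α]
      have e3 : α' (A.β (A.α x)) = A.β x := by rw [← hαβ, hα'α]
      have e4 : A.α (β' (A.β y)) = A.α y := by rw [hβ'β]
      rw [hevQ l (A.β x) (A.α y), hevDQ l (A.β y) (A.α x), e1, e2, e3, e4]
      abel
    · -- BiHom-Jacobi identity
      intro l μ x y z
      show ev Q l (A.α (A.β x)) (ev Q μ y z)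
          = ev Q (l + μ) (ev Q l (A.β x) y) (A.β z)
            + ev Q μ (A.β y) (ev Q l (A.α x) z)
      -- twist simplifications
      have twA : A.α (β' (A.α (A.β x))) = A.α (A.α x) := by rw [hβ'α, hβ'β]
      have twB : ∀ t : B, α' (A.β (A.α (β' t))) = t := fun t => by
        rw [← hαβ, hα'α, hββ']
      have twC : ∀ t : B, A.α (β' (A.β t)) = A.α t := fun t => by rw [hβ'β]
      have twD : A.α (β' (A.α x)) = A.α (A.α (β' x)) := by rw [hβ'α]
      have twE : α' (A.β (A.α x)) = A.β x := by rw [← hαβ, hα'α]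
      have twF : A.β (α' (A.β z)) = α' (A.β (A.β z)) := (hα'β (A.β z)).symm
      have twG : α' (A.β (A.α (A.α (β' x)))) = A.α x := by
        rw [← hαβ, hα'α, ← hαβ, hββ']
      have twH : A.β (A.α (A.α (β' x))) = A.α (A.α x) := by
        rw [← hαβ, ← hαβ, hββ']
      have twI : A.α (β' (α' (A.β y))) = y := by rw [← hα'β', hβ'β, hαα']
      -- expansion of the left-hand side
      have eL : ev Q l (A.α (A.β x)) (ev Q μ y z)
          = ev A.mul l (A.α (A.β x)) (ev A.mul μ y z)
            - ev A.mul l (A.α (A.β x)) (ev A.mul μ (A.α (β' y)) (α' (A.β z)))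
            - (ev A.mul l (A.α (A.α x)) (ev A.mul μ (α' (A.β y)) (α' (A.β z)))
              - ev A.mul l (A.α (A.α x)) (ev A.mul μ y (α' (A.β (α' (A.β z)))))) := by
        rw [hevQ l (A.α (A.β x)) (ev Q μ y z), hevQ μ y z, twA,
          evsub_r A.mul l (A.α (A.β x)), hab_sub, evsub_r A.mul l (A.α (A.α x)),
          hMba μ y z, hMba μ (A.α (β' y)) (α' (A.β z)), twB y]
      -- expansion of the first summand of the right-hand side
      have eR1 : ev Q (l + μ) (ev Q l (A.β x) y) (A.β z)
          = ev A.mul (l + μ) (ev A.mul l (A.β x) y) (A.β z)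
            - ev A.mul (l + μ) (ev A.mul l (A.α x) (α' (A.β y))) (A.β z)
            - (ev A.mul (l + μ) (ev A.mul l (A.α x) (A.α (β' y))) (α' (A.β (A.β z)))
              - ev A.mul (l + μ) (ev A.mul l (A.α (A.α (β' x))) y) (α' (A.β (A.β z)))) := by
        rw [hevQ (l + μ) (ev Q l (A.β x) y) (A.β z), hevQ l (A.β x) y, twC x,
          evsub_l A.mul (l + μ), hab'_sub, hMab l (A.β x) y,
          hMab l (A.α x) (α' (A.β y)), twC x, twD, twI,
          evsub_l A.mul (l + μ)]
      -- expansion of the second summand of the right-hand side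
      have eR2 : ev Q μ (A.β y) (ev Q l (A.α x) z)
          = ev A.mul μ (A.β y) (ev A.mul l (A.α x) z)
            - ev A.mul μ (A.β y) (ev A.mul l (A.α (A.α (β' x))) (α' (A.β z)))
            - (ev A.mul μ (A.α y) (ev A.mul l (A.β x) (α' (A.β z)))
              - ev A.mul μ (A.α y) (ev A.mul l (A.α x) (α' (A.β (α' (A.β z)))))) := by
        rw [hevQ μ (A.β y) (ev Q l (A.α x) z), hevQ l (A.α x) z, twC y, twD,
          evsub_r A.mul μ (A.β y), hab_sub, evsub_r A.mul μ (A.α y),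
          hMba l (A.α x) z, hMba l (A.α (A.α (β' x))) (α' (A.β z)), twE, twG]
      -- conversions to normal form
      have cT2 : ev A.mul l (A.α (A.β x)) (ev A.mul μ (A.α (β' y)) (α' (A.β z)))
          = ev A.mul l (A.α (A.β x)) (ev A.mul μ y (α' (A.β z))) := by
        rw [hG l μ (A.β x) (A.α (β' y)) (α' (A.β z)), twB y]
      have cT3 : ev A.mul l (A.α (A.α x)) (ev A.mul μ (α' (A.β y)) (α' (A.β z)))
          = ev A.mul l (A.α (A.α x)) (ev A.mul μ y (α' (A.β z))) :=
        (hG l μ (A.α x) y (α' (A.β z))).symm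
      have cT1R : ev A.mul (l + μ) (ev A.mul l (A.β x) y) (A.β z)
          = ev A.mul l (A.α (A.β x)) (ev A.mul μ y z) :=
        (hassoc l μ (A.β x) y z).symm
      have cS2 : ev A.mul (l + μ) (ev A.mul l (A.α x) (α' (A.β y))) (A.β z)
          = ev A.mul l (A.α (A.α x)) (ev A.mul μ y z) := by
        rw [← hassoc l μ (A.α x) (α' (A.β y)) z]
        exact (hG l μ (A.α x) y z).symm
      have cS3 : ev A.mul (l + μ) (ev A.mul l (A.α x) (A.α (β' y))) (α' (A.β (A.β z)))
          = ev A.mul l (A.α (A.α x)) (ev A.mul μ y (α' (A.β z))) := by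
        rw [← twF, ← hassoc l μ (A.α x) (A.α (β' y)) (α' (A.β z)),
          hG l μ (A.α x) (A.α (β' y)) (α' (A.β z)), twB y]
      have cS4 : ev A.mul (l + μ) (ev A.mul l (A.α (A.α (β' x))) y) (α' (A.β (A.β z)))
          = ev A.mul l (A.α (A.α x)) (ev A.mul μ y (α' (A.β z))) := by
        rw [← twF, ← hassoc l μ (A.α (A.α (β' x))) y (α' (A.β z)),
          ← hH l μ (A.α (A.α (β' x))) y (α' (A.β z)), twH]
      have cS5 : ev A.mul μ (A.β y) (ev A.mul l (A.α x) z)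
          = ev A.mul l (A.α (A.α x)) (ev A.mul μ y z) :=
        (hF l μ (A.α x) y z).symm
      have cS6 : ev A.mul μ (A.β y) (ev A.mul l (A.α (A.α (β' x))) (α' (A.β z)))
          = ev A.mul l (A.α (A.α x)) (ev A.mul μ y (α' (A.β z))) := by
        rw [← hF l μ (A.α (A.α (β' x))) y (α' (A.β z)),
          ← hH l μ (A.α (A.α (β' x))) y (α' (A.β z)), twH]
      have cS7 : ev A.mul μ (A.α y) (ev A.mul l (A.β x) (α' (A.β z)))
          = ev A.mul l (A.α (A.β x)) (ev A.mul μ y (α' (A.β z))) :=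
        (hE l μ (A.β x) y (α' (A.β z))).symm
      have cS8 : ev A.mul μ (A.α y) (ev A.mul l (A.α x) (α' (A.β (α' (A.β z)))))
          = ev A.mul l (A.α (A.α x)) (ev A.mul μ y (α' (A.β (α' (A.β z))))) :=
        (hE l μ (A.α x) y (α' (A.β (α' (A.β z))))).symm
      rw [eL, eR1, eR2, cT2, cT3, cT1R, cS2, cS3, cS4, cS5, cS6, cS7, cS8]
      abel
  · -- BiHom-Leibniz identity
    intro l μ x y z
    show ev Q l (A.α (A.β x)) (ev A.mul μ y z)
        = ev A.mul (l + μ) (ev Q l (A.β x) y) (A.β z)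
          + ev A.mul μ (A.β y) (ev Q l (A.α x) z)
    have twA : A.α (β' (A.α (A.β x))) = A.α (A.α x) := by rw [hβ'α, hβ'β]
    have twC : ∀ t : B, A.α (β' (A.β t)) = A.α t := fun t => by rw [hβ'β]
    have twD : A.α (β' (A.α x)) = A.α (A.α (β' x)) := by rw [hβ'α]
    have twE : α' (A.β (A.α x)) = A.β x := by rw [← hαβ, hα'α]
    have twG : α' (A.β (A.α (A.α (β' x)))) = A.α x := by
      rw [← hαβ, hα'α, ← hαβ, hββ']
    have twH : A.β (A.α (A.α (β' x))) = A.α (A.α x) := by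
      rw [← hαβ, ← hαβ, hββ']
    have eLb : ev Q l (A.α (A.β x)) (ev A.mul μ y z)
        = ev A.mul l (A.α (A.β x)) (ev A.mul μ y z)
          - ev A.mul l (A.α (A.α x)) (ev A.mul μ (α' (A.β y)) (α' (A.β z))) := by
      rw [hevQ l (A.α (A.β x)) (ev A.mul μ y z), twA, hMba μ y z]
    have cT3 : ev A.mul l (A.α (A.α x)) (ev A.mul μ (α' (A.β y)) (α' (A.β z)))
        = ev A.mul l (A.α (A.α x)) (ev A.mul μ y (α' (A.β z))) :=
      (hG l μ (A.α x) y (α' (A.β z))).symm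
    have cT1R : ev A.mul (l + μ) (ev A.mul l (A.β x) y) (A.β z)
        = ev A.mul l (A.α (A.β x)) (ev A.mul μ y z) :=
      (hassoc l μ (A.β x) y z).symm
    have cS2 : ev A.mul (l + μ) (ev A.mul l (A.α x) (α' (A.β y))) (A.β z)
        = ev A.mul l (A.α (A.α x)) (ev A.mul μ y z) := by
      rw [← hassoc l μ (A.α x) (α' (A.β y)) z]
      exact (hG l μ (A.α x) y z).symm
    have cS5 : ev A.mul μ (A.β y) (ev A.mul l (A.α x) z)
        = ev A.mul l (A.α (A.α x)) (ev A.mul μ y z) :=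
      (hF l μ (A.α x) y z).symm
    have cS6 : ev A.mul μ (A.β y) (ev A.mul l (A.α (A.α (β' x))) (α' (A.β z)))
        = ev A.mul l (A.α (A.α x)) (ev A.mul μ y (α' (A.β z))) := by
      rw [← hF l μ (A.α (A.α (β' x))) y (α' (A.β z)),
        ← hH l μ (A.α (A.α (β' x))) y (α' (A.β z)), twH]
    rw [eLb, cT3, hevQ l (A.β x) y, hevQ l (A.α x) z, twC x, twD,
      evsub_l A.mul (l + μ), evsub_r A.mul μ (A.β y), cT1R, cS2, cS5, cS6]
    abel
end

section
/- Let (B, *_λ, [·_λ·], α, β) be a multiplicative BiHom-Poisson conformal algebra and let n be a natural number. Define x *ⁿ_λ y = αⁿ(x *_λ y) and [x_λ y]ⁿ = αⁿ([x_λ y]). Then (B, *ⁿ_λ, [·_λ·]ⁿ, α^{n+1}, αⁿβ) is a BiHom-Poisson conformal algebra. -/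
section Aux
open ConfAlg

variable {B M : Type} [AddCommGroup B] [Module ℂ B] [AddCommGroup M] [Module ℂ M]

private lemma aux_sum_smul_eq_zero (c : ℕ →₀ M)
    (h : ∀ l : ℂ, (c.sum fun k b => l ^ k • b) = 0) : c = 0 := by
  ext k
  rw [Finsupp.coe_zero, Pi.zero_apply, ← Module.forall_dual_apply_eq_zero_iff ℂ]
  intro φ
  set p : Polynomial ℂ := c.sum fun j b => Polynomial.C (φ b) * Polynomial.X ^ j with hp
  have heval : ∀ l : ℂ, p.eval l = 0 := by
    intro l
    have hl := congrArg φ (h l)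
    rw [map_finsuppSum] at hl
    simp only [map_smul] at hl
    rw [hp, Finsupp.sum, Polynomial.eval_finset_sum]
    rw [Finsupp.sum, map_zero] at hl
    rw [← hl]
    refine Finset.sum_congr rfl fun j _ => ?_
    rw [Polynomial.eval_mul, Polynomial.eval_C, Polynomial.eval_pow, Polynomial.eval_X,
      smul_eq_mul, mul_comm]
  have hp0 : p = 0 := Polynomial.funext (by simpa using heval)
  have hck : p.coeff k = φ (c k) := by
    rw [hp, Finsupp.sum, Polynomial.finset_sum_coeff]
    simp only [Polynomial.coeff_C_mul, Polynomial.coeff_X_pow]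
    rw [Finset.sum_eq_single k]
    · by_cases hk : k ∈ c.support
      · simp
      · simp [Finsupp.notMem_support_iff.mp hk]
    · intro j _ hj; simp [Ne.symm hj]
    · intro hk; simp [Finsupp.notMem_support_iff.mp hk]
  rw [hp0] at hck
  simpa using hck.symm

private lemma aux_ev_ext (f g : CMap B M) {x y : B} {m m' : M}
    (h : ∀ l : ℂ, ev f l x m = ev g l y m') : f x m = g y m' := by
  have h0 := aux_sum_smul_eq_zero (f x m - g y m') (fun l => by
    rw [Finsupp.sum_sub_index (fun a b₁ b₂ => smul_sub _ _ _)]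
    have hl := h l
    simp only [ev] at hl
    rw [hl, sub_self])
  exact sub_eq_zero.mp h0

private lemma aux_ev_compr₂ (f : CMap B M) (g : Module.End ℂ M) (l : ℂ) (x : B) (m : M) :
    ev (f.compr₂ (Finsupp.mapRange.linearMap g)) l x m = g (ev f l x m) := by
  simp only [ev, LinearMap.compr₂_apply, Finsupp.mapRange.linearMap_apply]
  rw [Finsupp.sum_mapRange_index (fun k => smul_zero _), map_finsuppSum]
  exact Finsupp.sum_congr fun k _ => (map_smul g _ _).symm

private lemma aux_sum_pow_mapRange (g DM : Module.End ℂ M) (hc : Commute g DM)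
    (c : ℕ →₀ M) (l : ℂ) :
    ((Finsupp.mapRange.linearMap g) c).sum
        (fun k b => ((-DM - l • (1 : Module.End ℂ M)) ^ k) b)
      = g (c.sum fun k b => ((-DM - l • (1 : Module.End ℂ M)) ^ k) b) := by
  have hc' : Commute g ((-DM - l • (1 : Module.End ℂ M))) :=
    Commute.sub_right hc.neg_right ((Commute.one_right g).smul_right l)
  simp only [Finsupp.mapRange.linearMap_apply]
  rw [Finsupp.sum_mapRange_index (fun k => map_zero _), map_finsuppSum]
  refine Finsupp.sum_congr fun k _ => ?_
  have hq := (hc'.pow_right k).eq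
  calc ((-DM - l • 1) ^ k) (g (c k)) = (((-DM - l • 1) ^ k) * g) (c k) := rfl
    _ = (g * ((-DM - l • 1) ^ k)) (c k) := by rw [← hq]
    _ = g (((-DM - l • 1) ^ k) (c k)) := rfl

private lemma aux_evD_compr₂ (f : CMap B M) (g DM : Module.End ℂ M) (hc : Commute g DM)
    (l : ℂ) (x : B) (m : M) :
    evD DM (f.compr₂ (Finsupp.mapRange.linearMap g)) l x m = g (evD DM f l x m) := by
  simp only [evD, LinearMap.compr₂_apply]
  exact aux_sum_pow_mapRange g DM hc (f x m) l

end Aux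

open ConfAlg in
/-- from a multiplicative BiHom-Poisson conformal algebra
`(B, *_λ, [·_λ·], α, β)` one gets a BiHom-Poisson conformal algebra
`(B, αⁿ∘*_λ, αⁿ∘[·_λ·], α^{n+1}, αⁿβ)`. -/
theorem stmt3 {B : Type} [AddCommGroup B] [Module ℂ B]
    (P : PoissonData B) (hP : P.IsPoisson) (hMult : P.IsMult) (n : ℕ) :
    ∃ mul' br' : CMap B B,
      (∀ (l : ℂ) (x y : B), ev mul' l x y = (P.α ^ n) (ev P.mul l x y)) ∧
      (∀ (l : ℂ) (x y : B), ev br' l x y = (P.α ^ n) (ev P.br l x y)) ∧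
      (PoissonData.mk P.D mul' br' (P.α ^ (n + 1)) ((P.α ^ n) ∘ₗ P.β)).IsPoisson := by
  have hA := hP.1
  have hC := hP.2.1
  have hLb := hP.2.2.2
  have hAαD := hA.1
  have hAβD := hA.2.1
  have hAαβ := hA.2.2.1
  have hASq := hA.2.2.2.1
  have hAassoc := hA.2.2.2.2
  have hLSq := hP.2.2.1.2.2.2.1
  have hskew := hP.2.2.1.2.2.2.2.1
  have hjac := hP.2.2.1.2.2.2.2.2
  have hMα := hMult.1.1
  have hLα := hMult.2.1
  simp only [PoissonData.toAssoc] at hAαD hAβD hAαβ hASq hAassoc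
  simp only [PoissonData.toAssoc, AssocData.IsComm] at hC
  simp only [PoissonData.toLie] at hLSq hskew hjac hLα
  simp only [PoissonData.toAssoc, AssocData.IsMult] at hMα
  -- basic commuting facts
  have hαD : Commute P.α P.D := by
    rw [Commute, SemiconjBy, Module.End.mul_eq_comp, Module.End.mul_eq_comp]; exact hAαD
  have hαβ : Commute P.α P.β := by
    rw [Commute, SemiconjBy, Module.End.mul_eq_comp, Module.End.mul_eq_comp]; exact hAαβ
  have hDw : ∀ a : B, (P.α ^ n) (P.D a) = P.D ((P.α ^ n) a) := by
    intro a
    have hq := (hαD.pow_left n).eq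
    calc (P.α ^ n) (P.D a) = ((P.α ^ n) * P.D) a := rfl
      _ = (P.D * (P.α ^ n)) a := by rw [hq]
      _ = _ := rfl
  have hwβ : ∀ a : B, (P.α ^ n) (P.β a) = P.β ((P.α ^ n) a) := by
    intro a
    have hq := (hαβ.pow_left n).eq
    calc (P.α ^ n) (P.β a) = ((P.α ^ n) * P.β) a := rfl
      _ = (P.β * (P.α ^ n)) a := by rw [hq]
      _ = _ := rfl
  have hwα : ∀ a : B, P.α ((P.α ^ n) a) = (P.α ^ n) (P.α a) := by
    intro a
    rw [← Module.End.mul_apply, ← Module.End.mul_apply, ← pow_succ', ← pow_succ]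
  have hsucc : ∀ a : B, (P.α ^ (n + 1)) a = (P.α ^ n) (P.α a) := by
    intro a; rw [pow_succ, Module.End.mul_apply]
  have hDβ : ∀ a : B, P.β (P.D a) = P.D (P.β a) := by
    intro a
    have hq := LinearMap.ext_iff.mp hAβD a
    simpa using hq
  -- multiplicativity of powers of α
  have hpow : ∀ (f : CMap B B), (∀ (l : ℂ) (x y : B), P.α (ev f l x y) = ev f l (P.α x) (P.α y)) →
      ∀ (k : ℕ) (l : ℂ) (x y : B), ev f l ((P.α ^ k) x) ((P.α ^ k) y) = (P.α ^ k) (ev f l x y) := by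
    intro f hf k
    induction k with
    | zero => intro l x y; simp
    | succ m ih =>
        intro l x y
        simp only [pow_succ, Module.End.mul_apply]
        rw [ih, ← hf]
  have hmulW := hpow P.mul hMα n
  have hbrW := hpow P.br hLα n
  -- evD multiplicativity for the bracket
  have hbr_evD : ∀ (l : ℂ) (a b : B),
      evD P.D P.br l ((P.α ^ n) a) ((P.α ^ n) b) = (P.α ^ n) (evD P.D P.br l a b) := by
    intro l a b
    have hcoef : P.br ((P.α ^ n) a) ((P.α ^ n) b)
        = (P.br.compr₂ (Finsupp.mapRange.linearMap (P.α ^ n))) a b :=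
      aux_ev_ext _ _ (fun l => by rw [hbrW, aux_ev_compr₂])
    simp only [evD, hcoef, LinearMap.compr₂_apply]
    exact aux_sum_pow_mapRange _ _ (hαD.pow_left n) _ _
  refine ⟨P.mul.compr₂ (Finsupp.mapRange.linearMap (P.α ^ n)),
    P.br.compr₂ (Finsupp.mapRange.linearMap (P.α ^ n)),
    fun l x y => aux_ev_compr₂ _ _ _ _ _,
    fun l x y => aux_ev_compr₂ _ _ _ _ _, ?_⟩
  have hmapD : (P.α ^ (n + 1)) ∘ₗ P.D = P.D ∘ₗ P.α ^ (n + 1) := by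
    have hq := (hαD.pow_left (n + 1)).eq
    rw [Module.End.mul_eq_comp, Module.End.mul_eq_comp] at hq
    exact hq
  have hmapβD : ((P.α ^ n) ∘ₗ P.β) ∘ₗ P.D = P.D ∘ₗ (P.α ^ n) ∘ₗ P.β := by
    ext a
    simp only [LinearMap.comp_apply]
    rw [hDβ a, hDw]
  have hmapαβ : (P.α ^ (n + 1)) ∘ₗ (P.α ^ n) ∘ₗ P.β = ((P.α ^ n) ∘ₗ P.β) ∘ₗ P.α ^ (n + 1) := by
    have hcm : Commute (P.α ^ (n + 1)) ((P.α ^ n) * P.β) :=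
      ((Commute.refl P.α).pow_pow _ _).mul_right (hαβ.pow_left _)
    have hq := hcm.eq
    simp only [Module.End.mul_eq_comp] at hq
    exact hq
  refine ⟨⟨hmapD, hmapβD, hmapαβ, ⟨?_, ?_⟩, ?_⟩, ?_,
    ⟨hmapD, hmapβD, hmapαβ, ⟨?_, ?_⟩, ?_, ?_⟩, ?_⟩
  · dsimp only [PoissonData.toAssoc, PoissonData.toLie]
    -- Sesq mul' 1
    intro l x m
    rw [aux_ev_compr₂, aux_ev_compr₂, hASq.1 l x m, map_smul]
  · dsimp only [PoissonData.toAssoc, PoissonData.toLie]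
    -- Sesq mul' 2
    intro l x m
    rw [aux_ev_compr₂, aux_ev_compr₂, hASq.2 l x m, map_add, map_smul, hDw]
  · dsimp only [PoissonData.toAssoc, PoissonData.toLie]
    -- associativity
    intro l μ x y z
    rw [aux_ev_compr₂, aux_ev_compr₂, aux_ev_compr₂, aux_ev_compr₂, hsucc x, hmulW,
      hAassoc, LinearMap.comp_apply, hmulW]
  · dsimp only [PoissonData.toAssoc, PoissonData.toLie]
    -- commutativity
    intro l x y
    rw [aux_ev_compr₂, aux_evD_compr₂ P.mul (P.α ^ n) P.D (hαD.pow_left n), hC l x y]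
  · dsimp only [PoissonData.toAssoc, PoissonData.toLie]
    -- Sesq br' 1
    intro l x m
    rw [aux_ev_compr₂, aux_ev_compr₂, hLSq.1 l x m, map_smul]
  · dsimp only [PoissonData.toAssoc, PoissonData.toLie]
    -- Sesq br' 2
    intro l x m
    rw [aux_ev_compr₂, aux_ev_compr₂, hLSq.2 l x m, map_add, map_smul, hDw]
  · dsimp only [PoissonData.toAssoc, PoissonData.toLie]
    -- skew-symmetry
    intro l x y
    rw [aux_ev_compr₂, aux_evD_compr₂ P.br (P.α ^ n) P.D (hαD.pow_left n),
      LinearMap.comp_apply, LinearMap.comp_apply, hsucc x, hsucc y, hbrW, hbr_evD,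
      hskew, map_neg, map_neg]
  · dsimp only [PoissonData.toAssoc, PoissonData.toLie]
    -- Jacobi identity
    intro l μ x y z
    have h1 : ev (P.br.compr₂ (Finsupp.mapRange.linearMap (P.α ^ n))) (l + μ)
          (ev (P.br.compr₂ (Finsupp.mapRange.linearMap (P.α ^ n))) l (((P.α ^ n) ∘ₗ P.β) x) y)
          (((P.α ^ n) ∘ₗ P.β) z)
        = (P.α ^ n) ((P.α ^ n) (ev P.br (l + μ) (ev P.br l (P.β ((P.α ^ n) x)) y) (P.β z))) := by
      rw [aux_ev_compr₂, aux_ev_compr₂, LinearMap.comp_apply, LinearMap.comp_apply,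
        hwβ x, hbrW]
    have h2 : ev (P.br.compr₂ (Finsupp.mapRange.linearMap (P.α ^ n))) μ
          (((P.α ^ n) ∘ₗ P.β) y)
          (ev (P.br.compr₂ (Finsupp.mapRange.linearMap (P.α ^ n))) l ((P.α ^ (n + 1)) x) z)
        = (P.α ^ n) ((P.α ^ n) (ev P.br μ (P.β y) (ev P.br l (P.α ((P.α ^ n) x)) z))) := by
      rw [aux_ev_compr₂, aux_ev_compr₂, LinearMap.comp_apply, hsucc x, hbrW, ← hwα x]
    calc ev (P.br.compr₂ (Finsupp.mapRange.linearMap (P.α ^ n))) l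
          ((P.α ^ (n + 1)) (((P.α ^ n) ∘ₗ P.β) x))
          (ev (P.br.compr₂ (Finsupp.mapRange.linearMap (P.α ^ n))) μ y z)
        = (P.α ^ n) ((P.α ^ n) (ev P.br l (P.α (P.β ((P.α ^ n) x))) (ev P.br μ y z))) := by
          rw [aux_ev_compr₂, aux_ev_compr₂, LinearMap.comp_apply, hsucc, hwα, hbrW,
            ← hwα, hwβ]
      _ = (P.α ^ n) ((P.α ^ n) (ev P.br (l + μ) (ev P.br l (P.β ((P.α ^ n) x)) y) (P.β z)
            + ev P.br μ (P.β y) (ev P.br l (P.α ((P.α ^ n) x)) z))) := by rw [hjac]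
      _ = _ := by rw [h1, h2, map_add, map_add]
  · dsimp only [PoissonData.Leibniz]
    -- Leibniz identity
    intro l μ x y z
    have h1 : ev (P.mul.compr₂ (Finsupp.mapRange.linearMap (P.α ^ n))) (l + μ)
          (ev (P.br.compr₂ (Finsupp.mapRange.linearMap (P.α ^ n))) l (((P.α ^ n) ∘ₗ P.β) x) y)
          (((P.α ^ n) ∘ₗ P.β) z)
        = (P.α ^ n) ((P.α ^ n) (ev P.mul (l + μ) (ev P.br l (P.β ((P.α ^ n) x)) y) (P.β z))) := by
      rw [aux_ev_compr₂, aux_ev_compr₂, LinearMap.comp_apply, LinearMap.comp_apply,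
        hwβ x, hmulW]
    have h2 : ev (P.mul.compr₂ (Finsupp.mapRange.linearMap (P.α ^ n))) μ
          (((P.α ^ n) ∘ₗ P.β) y)
          (ev (P.br.compr₂ (Finsupp.mapRange.linearMap (P.α ^ n))) l ((P.α ^ (n + 1)) x) z)
        = (P.α ^ n) ((P.α ^ n) (ev P.mul μ (P.β y) (ev P.br l (P.α ((P.α ^ n) x)) z))) := by
      rw [aux_ev_compr₂, aux_ev_compr₂, LinearMap.comp_apply, hsucc x, hmulW, ← hwα x]
    calc ev (P.br.compr₂ (Finsupp.mapRange.linearMap (P.α ^ n))) l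
          ((P.α ^ (n + 1)) (((P.α ^ n) ∘ₗ P.β) x))
          (ev (P.mul.compr₂ (Finsupp.mapRange.linearMap (P.α ^ n))) μ y z)
        = (P.α ^ n) ((P.α ^ n) (ev P.br l (P.α (P.β ((P.α ^ n) x))) (ev P.mul μ y z))) := by
          rw [aux_ev_compr₂, aux_ev_compr₂, LinearMap.comp_apply, hsucc, hwα, hbrW,
            ← hwα, hwβ]
      _ = (P.α ^ n) ((P.α ^ n) (ev P.mul (l + μ) (ev P.br l (P.β ((P.α ^ n) x)) y) (P.β z)
            + ev P.mul μ (P.β y) (ev P.br l (P.α ((P.α ^ n) x)) z))) := by rw [hLb]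
      _ = _ := by rw [h1, h2, map_add, map_add]
end

section
/- Let (B, *_λ, [·_λ·], α, β) be a BiHom-Poisson conformal algebra and let R be a Rota-Baxter operator on B. Define new λ-products x *'_λ y = R(x) *_λ y + x *_λ R(y) and [x_λ y]' = [R(x)_λ y] + [x_λ R(y)]. Then (B, *'_λ, [·_λ·]', α, β) is a BiHom-Poisson conformal algebra. -/
/-!
Sesquilinearity, commutativity and skew-symmetry are linear in the product, so they pass to the
twisted products as soon as `R` commutes with `∂`, `α`, `β`. For associativity, Jacobi and Leibniz,
the Rota-Baxter identities turn `R(x *'_λ y)` into `R x *_λ R y` (and likewise for the bracket);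
after expanding, each side is a sum of three terms and the twisted identity is the sum of the
original one at `(R x, R y, z)`, `(R x, y, R z)` and `(x, R y, R z)`.
-/

namespace ConfAlg

section Linearity

variable {B M : Type} [AddCommGroup B] [Module ℂ B] [AddCommGroup M] [Module ℂ M]

theorem ev_add_left (f : CMap B M) (l : ℂ) (x x' : B) (m : M) :
    ev f l (x + x') m = ev f l x m + ev f l x' m := by
  unfold ev
  rw [map_add, LinearMap.add_apply]
  exact Finsupp.sum_add_index' (fun _ => smul_zero _) (fun _ _ _ => smul_add _ _ _)

theorem ev_add_right (f : CMap B M) (l : ℂ) (x : B) (m m' : M) :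
    ev f l x (m + m') = ev f l x m + ev f l x m' := by
  unfold ev
  rw [map_add]
  exact Finsupp.sum_add_index' (fun _ => smul_zero _) (fun _ _ _ => smul_add _ _ _)

end Linearity

variable {B : Type} [AddCommGroup B] [Module ℂ B]

noncomputable def twist (f : CMap B B) (R : Module.End ℂ B) : CMap B B :=
  LinearMap.mk₂ ℂ (fun x y => f (R x) y + f x (R y))
    (fun x x' y => by simp only [map_add, LinearMap.add_apply]; abel)
    (fun c x y => by simp only [map_smul, LinearMap.smul_apply, smul_add])
    (fun x y y' => by simp only [map_add]; abel)
    (fun c x y => by simp only [map_smul, smul_add])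

theorem ev_twist (f : CMap B B) (R : Module.End ℂ B) (l : ℂ) (x y : B) :
    ev (twist f R) l x y = ev f l (R x) y + ev f l x (R y) :=
  Finsupp.sum_add_index' (fun _ => smul_zero _) (fun _ _ _ => smul_add _ _ _)

theorem evD_twist (D : Module.End ℂ B) (f : CMap B B) (R : Module.End ℂ B) (l : ℂ) (x y : B) :
    evD D (twist f R) l x y = evD D f l (R x) y + evD D f l x (R y) :=
  Finsupp.sum_add_index' (fun _ => map_zero _) (fun _ _ _ => map_add _ _ _)

def IsRotaBaxter (f : CMap B B) (R : Module.End ℂ B) : Prop :=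
  ∀ (l : ℂ) (x y : B), ev f l (R x) (R y) = R (ev f l (R x) y + ev f l x (R y))

theorem IsRotaBaxter.ev_twist_apply {f : CMap B B} {R : Module.End ℂ B}
    (hR : IsRotaBaxter f R) (l : ℂ) (x y : B) :
    R (ev (twist f R) l x y) = ev f l (R x) (R y) := by
  rw [ev_twist, hR]

/-- The common shape of the BiHom-Jacobi identity (`F = G = [·_λ·]`) and of the BiHom-Leibniz
identity (`F = [·_λ·]`, `G = *_λ`): `F(αβ x)` acts on `G` as a twisted derivation. -/
def LeibnizRule (F G : CMap B B) (α β : Module.End ℂ B) : Prop :=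
  ∀ (l μ : ℂ) (x y z : B),
    ev F l (α (β x)) (ev G μ y z)
      = ev G (l + μ) (ev F l (β x) y) (β z) + ev G μ (β y) (ev F l (α x) z)

variable {D R α β : Module.End ℂ B}

theorem Sesq.twist {f : CMap B B} (hf : Sesq D D f) (hRD : ∀ x, R (D x) = D (R x)) :
    Sesq D D (twist f R) := by
  obtain ⟨hleft, hright⟩ := hf
  refine ⟨fun l x y => ?_, fun l x y => ?_⟩
  · rw [ev_twist, ev_twist, hRD, hleft, hleft, smul_add]
  · rw [ev_twist, ev_twist, hRD, hright, hright, map_add, smul_add]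
    abel

theorem twist_comm {f : CMap B B} (hf : ∀ (l : ℂ) (x y : B), ev f l x y = evD D f l y x)
    (l : ℂ) (x y : B) : ev (twist f R) l x y = evD D (twist f R) l y x := by
  rw [ev_twist, evD_twist, hf l (R x), hf l x]
  abel

theorem twist_skew {f : CMap B B}
    (hf : ∀ (l : ℂ) (x y : B), ev f l (β x) (α y) = -evD D f l (β y) (α x))
    (hRα : ∀ x, R (α x) = α (R x)) (hRβ : ∀ x, R (β x) = β (R x)) (l : ℂ) (x y : B) :
    ev (twist f R) l (β x) (α y) = -evD D (twist f R) l (β y) (α x) := by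
  rw [ev_twist, evD_twist, hRβ, hRα, hf l (R x), hf l x, hRβ, hRα]
  abel

theorem twist_assoc {f : CMap B B} (hR : IsRotaBaxter f R)
    (hf : ∀ (l μ : ℂ) (x y z : B), ev f l (α x) (ev f μ y z) = ev f (l + μ) (ev f l x y) (β z))
    (hRα : ∀ x, R (α x) = α (R x)) (hRβ : ∀ x, R (β x) = β (R x)) (l μ : ℂ) (x y z : B) :
    ev (twist f R) l (α x) (ev (twist f R) μ y z)
      = ev (twist f R) (l + μ) (ev (twist f R) l x y) (β z) := by
  rw [ev_twist, ev_twist _ _ (l + μ), hR.ev_twist_apply, hR.ev_twist_apply, hRα, hRβ]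
  simp only [ev_twist, ev_add_left, ev_add_right]
  rw [hf l μ (R x) (R y) z, hf l μ (R x) y (R z), hf l μ x (R y) (R z)]
  abel

theorem LeibnizRule.twist {F G : CMap B B} (h : LeibnizRule F G α β)
    (hRF : IsRotaBaxter F R) (hRG : IsRotaBaxter G R)
    (hRα : ∀ x, R (α x) = α (R x)) (hRβ : ∀ x, R (β x) = β (R x)) :
    LeibnizRule (twist F R) (twist G R) α β := by
  intro l μ x y z
  rw [ev_twist, ev_twist _ _ (l + μ), ev_twist _ _ μ (β y), hRG.ev_twist_apply,
    hRF.ev_twist_apply, hRF.ev_twist_apply]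
  simp only [hRα, hRβ, ev_twist, ev_add_left, ev_add_right]
  rw [h l μ (R x) (R y) z, h l μ (R x) y (R z), h l μ x (R y) (R z)]
  abel

end ConfAlg

open ConfAlg in
/-- a Rota-Baxter operator on a BiHom-Poisson conformal algebra
induces a new BiHom-Poisson conformal algebra structure via
`x *'_λ y = R(x) *_λ y + x *_λ R(y)` and `[x_λ y]' = [R(x)_λ y] + [x_λ R(y)]`. -/
theorem stmt4 {B : Type} [AddCommGroup B] [Module ℂ B]
    (P : PoissonData B) (hP : P.IsPoisson)
    (R : Module.End ℂ B)
    (hRD : R ∘ₗ P.D = P.D ∘ₗ R)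
    (hRα : R ∘ₗ P.α = P.α ∘ₗ R) (hRβ : R ∘ₗ P.β = P.β ∘ₗ R)
    (hRmul : ∀ (l : ℂ) (x y : B),
      ev P.mul l (R x) (R y) = R (ev P.mul l (R x) y + ev P.mul l x (R y)))
    (hRbr : ∀ (l : ℂ) (x y : B),
      ev P.br l (R x) (R y) = R (ev P.br l (R x) y + ev P.br l x (R y))) :
    ∃ mul' br' : CMap B B,
      (∀ (l : ℂ) (x y : B),
        ev mul' l x y = ev P.mul l (R x) y + ev P.mul l x (R y)) ∧
      (∀ (l : ℂ) (x y : B),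
        ev br' l x y = ev P.br l (R x) y + ev P.br l x (R y)) ∧
      (PoissonData.mk P.D mul' br' P.α P.β).IsPoisson := by
  obtain ⟨⟨hαD, hβD, hαβ, hmulSesq, hassoc⟩, hcomm, ⟨-, -, -, hbrSesq, hskew, hjacobi⟩, hleibniz⟩ :=
    hP
  have rD := LinearMap.congr_fun hRD
  have rα := LinearMap.congr_fun hRα
  have rβ := LinearMap.congr_fun hRβ
  have rbMul : IsRotaBaxter P.mul R := hRmul
  have rbBr : IsRotaBaxter P.br R := hRbr
  refine ⟨twist P.mul R, twist P.br R, ev_twist _ _, ev_twist _ _, ?_, ?_, ?_, ?_⟩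
  · exact ⟨hαD, hβD, hαβ, hmulSesq.twist rD, twist_assoc rbMul hassoc rα rβ⟩
  · exact twist_comm hcomm
  · exact ⟨hαD, hβD, hαβ, hbrSesq.twist rD, twist_skew hskew rα rβ,
      LeibnizRule.twist hjacobi rbBr rbBr rα rβ⟩
  · exact LeibnizRule.twist (G := P.mul) hleibniz rbBr rbMul rα rβ
end

section
/- Let (B, *_λ, α, β) be a regular BiHom-preLie conformal algebra. Define the λ-bracket [x_λ y] = x *_λ y − α⁻¹β(y) *_{−∂−λ} αβ⁻¹(x). Then (B, [·_λ·], α, β) is a BiHom-Lie conformal algebra (the sub-adjacent BiHom-Lie conformal algebra of (B, *_λ, α, β)). -/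
/-!
A λ-polynomial with coefficients in `M` is a finitely supported family `ℕ →₀ M`, and both `ev`
and `evD` substitute an operator for `λ` (a scalar `l`, resp. `-∂-l`). Two polynomials agreeing at
every complex number are equal, so every identity between conformal products that holds for all
scalar `λ` holds coefficientwise, and hence also after substituting any operator for `λ`.

By sesquilinearity `∂` in the first argument of `_ *_ν w` acts as `-ν`, so in a nested product
`(u *_{-∂-λ} v) *_{λ+μ} w` the inner variable `-∂-λ` becomes `μ`; the same happens in the second
argument of `u *_{-∂-λ-μ} _`. Substituting `λ ↦ -∂-λ-μ` into the preLie identity gives a second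
family of identities. Expanding the BiHom-Jacobi identity of the bracket produces twelve terms;
they cancel against the preLie identity for `(x, α⁻¹y, z)`, the two nesting rules, and the
substituted preLie identity used once for `λ` and once for `μ`.
-/

namespace ConfAlg

section Operators

variable {M : Type} [AddCommGroup M] [Module ℂ M]

lemma apply_apply_of_comp_eq_one {a b : Module.End ℂ M} (h : a ∘ₗ b = 1) (x : M) : a (b x) = x :=
  LinearMap.congr_fun h x

lemma comp_comm_of_inverse {a a' Y : Module.End ℂ M}
    (h1 : a' ∘ₗ a = 1) (h2 : a ∘ₗ a' = 1) (h : a ∘ₗ Y = Y ∘ₗ a) : a' ∘ₗ Y = Y ∘ₗ a' :=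
  Commute.units_inv_left (u := ⟨a, a', h2, h1⟩) h

lemma smul_one_comm (T : Module.End ℂ M) (l : ℂ) : T ∘ₗ (l • 1) = (l • 1) ∘ₗ T :=
  ((Commute.one_right T).smul_right l).eq

lemma neg_sub_smul_one_comm (T : Module.End ℂ M) (l : ℂ) :
    T ∘ₗ (-T - l • 1) = (-T - l • 1) ∘ₗ T :=
  ((Commute.refl T).neg_right.sub_right ((Commute.one_right T).smul_right l)).eq

end Operators

section PolyEval

variable {M N : Type} [AddCommGroup M] [Module ℂ M] [AddCommGroup N] [Module ℂ N]

noncomputable def evalAt (T : Module.End ℂ M) : (ℕ →₀ M) →ₗ[ℂ] M :=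
  Finsupp.lsum ℂ fun n => T ^ n

@[simp] lemma evalAt_single (T : Module.End ℂ M) (n : ℕ) (b : M) :
    evalAt T (Finsupp.single n b) = (T ^ n) b := by
  simp [evalAt]

lemma ev_eq_evalAt {B : Type} [AddCommGroup B] [Module ℂ B]
    (f : CMap B M) (l : ℂ) (x : B) (m : M) :
    ev f l x m = evalAt (l • 1) (f x m) := by
  rw [ev, evalAt, Finsupp.lsum_apply]
  exact Finsupp.sum_congr fun n _ => by simp [smul_pow]

lemma evD_eq_evalAt {B : Type} [AddCommGroup B] [Module ℂ B]
    (DM : Module.End ℂ M) (f : CMap B M) (l : ℂ) (x : B) (m : M) :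
    evD DM f l x m = evalAt (-DM - l • 1) (f x m) := rfl

section Linearity

variable {B : Type} [AddCommGroup B] [Module ℂ B] (DM : Module.End ℂ M) (f : CMap B M) (l : ℂ)

lemma ev_sub_left (u v : B) (m : M) : ev f l (u - v) m = ev f l u m - ev f l v m := by
  simp only [ev_eq_evalAt, map_sub, LinearMap.sub_apply]

lemma ev_sub_right (u : B) (m n : M) : ev f l u (m - n) = ev f l u m - ev f l u n := by
  simp only [ev_eq_evalAt, map_sub]

lemma evD_sub_left (u v : B) (m : M) :
    evD DM f l (u - v) m = evD DM f l u m - evD DM f l v m := by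
  simp only [evD_eq_evalAt, map_sub, LinearMap.sub_apply]

lemma evD_sub_right (u : B) (m n : M) :
    evD DM f l u (m - n) = evD DM f l u m - evD DM f l u n := by
  simp only [evD_eq_evalAt, map_sub]

end Linearity

lemma evalAt_mapRange {Φ : M →ₗ[ℂ] N} {S : Module.End ℂ M} {T : Module.End ℂ N}
    (h : Φ ∘ₗ S = T ∘ₗ Φ) (g : ℕ →₀ M) :
    evalAt T (Finsupp.mapRange.linearMap Φ g) = Φ (evalAt S g) := by
  suffices evalAt T ∘ₗ Finsupp.mapRange.linearMap Φ = Φ ∘ₗ evalAt S from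
    LinearMap.congr_fun this g
  refine Finsupp.lhom_ext fun n b => ?_
  simpa using LinearMap.congr_fun (Module.End.commute_pow_left_of_commute h.symm n) b

noncomputable def mulX : (ℕ →₀ M) →ₗ[ℂ] (ℕ →₀ M) :=
  Finsupp.lmapDomain M ℂ (· + 1)

lemma evalAt_mulX (T : Module.End ℂ M) (g : ℕ →₀ M) :
    evalAt T (mulX g) = T (evalAt T g) := by
  suffices evalAt T ∘ₗ mulX = T ∘ₗ evalAt T from LinearMap.congr_fun this g
  refine Finsupp.lhom_ext fun n b => ?_
  simp [mulX, pow_succ']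

lemma eq_zero_of_forall_evalAt_smul_one {g : ℕ →₀ M}
    (H : ∀ l : ℂ, evalAt (l • 1) g = 0) : g = 0 := by
  ext k
  rw [Finsupp.zero_apply, ← Module.forall_dual_apply_eq_zero_iff ℂ]
  intro φ
  let p : Polynomial ℂ := g.sum fun n b => Polynomial.monomial n (φ b)
  have hp : p = 0 := Polynomial.funext fun l => by
    have := congrArg φ (H l)
    simp only [evalAt, Finsupp.lsum_apply, smul_pow, one_pow, Finsupp.sum, map_sum] at this
    simpa [p, Polynomial.eval_finsetSum, Finsupp.sum, mul_comm] using this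
  have hcoeff : p.coeff k = φ (g k) := by
    simp only [p, Finsupp.sum, Polynomial.finsetSum_coeff, Polynomial.coeff_monomial]
    rw [Finset.sum_ite_eq']
    split_ifs with hk
    · rfl
    · simp [Finsupp.notMem_support_iff.mp hk]
  rw [← hcoeff, hp, Polynomial.coeff_zero]

lemma eq_of_forall_evalAt_smul_one {g h : ℕ →₀ M}
    (H : ∀ l : ℂ, evalAt (l • 1) g = evalAt (l • 1) h) : g = h :=
  sub_eq_zero.mp <| eq_zero_of_forall_evalAt_smul_one fun l => by rw [map_sub, H, sub_self]

/-- Substitutes for `λ` an operator `S` on λ-polynomials, e.g. `mulX + m • 1` for `λ + m`. -/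
noncomputable def subst (S : Module.End ℂ (ℕ →₀ M)) : Module.End ℂ (ℕ →₀ M) :=
  evalAt S ∘ₗ Finsupp.mapRange.linearMap (Finsupp.lsingle 0)

lemma evalAt_subst {S : Module.End ℂ (ℕ →₀ M)} {T U : Module.End ℂ M}
    (h : evalAt T ∘ₗ S = U ∘ₗ evalAt T) (g : ℕ →₀ M) :
    evalAt T (subst S g) = evalAt U g := by
  have hsingle : evalAt T ∘ₗ Finsupp.lsingle 0 = LinearMap.id := LinearMap.ext fun b => by simp
  rw [subst, LinearMap.comp_apply, ← evalAt_mapRange h, ← LinearMap.comp_apply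
    (Finsupp.mapRange.linearMap _), ← Finsupp.mapRange.linearMap_comp, hsingle,
    Finsupp.mapRange.linearMap_id, LinearMap.id_apply]

noncomputable def shiftBy (m : ℂ) : Module.End ℂ (ℕ →₀ M) :=
  subst (mulX + m • 1)

lemma evalAt_shiftBy (T : Module.End ℂ M) (m : ℂ) (g : ℕ →₀ M) :
    evalAt T (shiftBy m g) = evalAt (T + m • 1) g :=
  evalAt_subst (LinearMap.ext fun g => by simp [evalAt_mulX]) g

noncomputable def substNegD (D : Module.End ℂ M) : Module.End ℂ (ℕ →₀ M) :=
  subst (-(mulX + Finsupp.mapRange.linearMap D))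

lemma evalAt_substNegD {D T : Module.End ℂ M} (hT : D ∘ₗ T = T ∘ₗ D) (g : ℕ →₀ M) :
    evalAt T (substNegD D g) = evalAt (-D - T) g :=
  evalAt_subst (LinearMap.ext fun g => by
    simp only [LinearMap.comp_apply, LinearMap.neg_apply, LinearMap.add_apply, map_neg, map_add,
      evalAt_mulX, evalAt_mapRange hT, LinearMap.sub_apply]
    abel) g

lemma apply_evalAt_neg_sub_smul_one {Θ : M →ₗ[ℂ] N} {D : Module.End ℂ M} {l μ : ℂ}
    (h : Θ ∘ₗ D = -(l + μ) • Θ) (g : ℕ →₀ M) :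
    Θ (evalAt (-D - l • 1) g) = Θ (evalAt (μ • 1) g) := by
  have hD : Θ ∘ₗ (-D - l • 1) = (μ • 1) ∘ₗ Θ := LinearMap.ext fun b => by
    have := LinearMap.congr_fun h b
    simp only [LinearMap.comp_apply, LinearMap.smul_apply] at this
    simp only [LinearMap.comp_apply, LinearMap.sub_apply, LinearMap.neg_apply, map_sub, map_neg,
      this, LinearMap.smul_apply, Module.End.one_apply, map_smul]
    module
  have hμ : Θ ∘ₗ (μ • 1) = (μ • 1) ∘ₗ Θ := LinearMap.ext fun b => by simp
  rw [← evalAt_mapRange hD, ← evalAt_mapRange hμ]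

end PolyEval

section Sesquilinear

variable {B M : Type} [AddCommGroup B] [Module ℂ B] [AddCommGroup M] [Module ℂ M]
  {D : Module.End ℂ B} {DM : Module.End ℂ M} {f : CMap B M}

lemma Sesq.apply_D_left (hf : Sesq D DM f) (x : B) (m : M) : f (D x) m = -mulX (f x m) :=
  eq_of_forall_evalAt_smul_one fun l => by
    rw [← ev_eq_evalAt, hf.1, map_neg, evalAt_mulX, ev_eq_evalAt]
    simp

lemma Sesq.apply_D_right (hf : Sesq D DM f) (x : B) (m : M) :
    f x (DM m) = Finsupp.mapRange.linearMap DM (f x m) + mulX (f x m) :=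
  eq_of_forall_evalAt_smul_one fun l => by
    rw [← ev_eq_evalAt, hf.2, map_add, evalAt_mulX, evalAt_mapRange (smul_one_comm DM l),
      ev_eq_evalAt]
    simp

lemma Sesq.evalAt_D_left (hf : Sesq D DM f) (T : Module.End ℂ M) (x : B) (m : M) :
    evalAt T (f (D x) m) = -T (evalAt T (f x m)) := by
  rw [hf.apply_D_left, map_neg, evalAt_mulX]

lemma Sesq.evalAt_D_right (hf : Sesq D DM f) {T : Module.End ℂ M} (hT : DM ∘ₗ T = T ∘ₗ DM)
    (x : B) (m : M) :
    evalAt T (f x (DM m)) = DM (evalAt T (f x m)) + T (evalAt T (f x m)) := by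
  rw [hf.apply_D_right, map_add, evalAt_mapRange hT, evalAt_mulX]

lemma Sesq.evD_D_left (hf : Sesq D DM f) (l : ℂ) (x : B) (m : M) :
    evD DM f l (D x) m = DM (evD DM f l x m) + l • evD DM f l x m := by
  simp only [evD_eq_evalAt]
  rw [hf.evalAt_D_left]
  simp only [LinearMap.sub_apply, LinearMap.neg_apply, LinearMap.smul_apply, Module.End.one_apply]
  abel

lemma Sesq.evD_D_right (hf : Sesq D DM f) (l : ℂ) (x : B) (m : M) :
    evD DM f l x (DM m) = -l • evD DM f l x m := by
  simp only [evD_eq_evalAt]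
  rw [hf.evalAt_D_right (neg_sub_smul_one_comm DM l)]
  simp only [LinearMap.sub_apply, LinearMap.neg_apply, LinearMap.smul_apply, Module.End.one_apply]
  module

end Sesquilinear

section Nested

variable {B : Type} [AddCommGroup B] [Module ℂ B] {D : Module.End ℂ B}

lemma Sesq.ev_evD_left {f : CMap B B} (hf : Sesq D D f) (l μ : ℂ) (u v w : B) :
    ev f (l + μ) (evD D f l u v) w = ev f (l + μ) (ev f μ u v) w := by
  have h : (evalAt ((l + μ) • 1) ∘ₗ f.flip w) ∘ₗ D
      = -(l + μ) • (evalAt ((l + μ) • 1) ∘ₗ f.flip w) :=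
    LinearMap.ext fun b => by
      simp only [LinearMap.comp_apply, LinearMap.flip_apply, hf.evalAt_D_left,
        LinearMap.smul_apply, Module.End.one_apply, neg_smul, LinearMap.neg_apply]
  simp only [ev_eq_evalAt, evD_eq_evalAt]
  exact apply_evalAt_neg_sub_smul_one h (f u v)

lemma Sesq.evD_evD_right {f : CMap B B} (hf : Sesq D D f) (l μ : ℂ) (u v w : B) :
    evD D f (l + μ) u (evD D f l v w) = evD D f (l + μ) u (ev f μ v w) := by
  have h : (evalAt (-D - (l + μ) • 1) ∘ₗ f u) ∘ₗ D
      = -(l + μ) • (evalAt (-D - (l + μ) • 1) ∘ₗ f u) :=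
    LinearMap.ext fun b => by
      simp only [LinearMap.comp_apply, hf.evalAt_D_right (neg_sub_smul_one_comm D _),
        LinearMap.sub_apply, LinearMap.neg_apply, LinearMap.smul_apply, Module.End.one_apply]
      module
  simp only [ev_eq_evalAt, evD_eq_evalAt]
  exact apply_evalAt_neg_sub_smul_one h (f v w)

end Nested

section Multiplicative

variable {B M : Type} [AddCommGroup B] [Module ℂ B] [AddCommGroup M] [Module ℂ M]
  {f : CMap B M} {φ : Module.End ℂ M} {ψ : Module.End ℂ B}

lemma mapRange_apply_of_map_ev (h : ∀ l x m, φ (ev f l x m) = ev f l (ψ x) (φ m))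
    (x : B) (m : M) : Finsupp.mapRange.linearMap φ (f x m) = f (ψ x) (φ m) :=
  eq_of_forall_evalAt_smul_one fun l => by
    rw [evalAt_mapRange (smul_one_comm φ l), ← ev_eq_evalAt, h, ev_eq_evalAt]

lemma map_evD_of_map_ev {DM : Module.End ℂ M}
    (h : ∀ l x m, φ (ev f l x m) = ev f l (ψ x) (φ m)) (hφ : φ ∘ₗ DM = DM ∘ₗ φ)
    (l : ℂ) (x : B) (m : M) : φ (evD DM f l x m) = evD DM f l (ψ x) (φ m) := by
  have hT : φ ∘ₗ (-DM - l • 1) = (-DM - l • 1) ∘ₗ φ := by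
    rw [LinearMap.comp_sub, LinearMap.sub_comp, LinearMap.comp_neg, LinearMap.neg_comp, hφ,
      smul_one_comm]
  rw [evD_eq_evalAt, evD_eq_evalAt, ← mapRange_apply_of_map_ev h, evalAt_mapRange hT]

lemma map_ev_of_inverse {f : CMap B B} {α α' : Module.End ℂ B}
    (h : ∀ l x y, α (ev f l x y) = ev f l (α x) (α y)) (h1 : α' ∘ₗ α = 1) (h2 : α ∘ₗ α' = 1)
    (l : ℂ) (x y : B) : α' (ev f l x y) = ev f l (α' x) (α' y) := by
  conv_lhs => rw [← apply_apply_of_comp_eq_one h2 x, ← apply_apply_of_comp_eq_one h2 y, ← h,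
    apply_apply_of_comp_eq_one h1]

end Multiplicative

section TwistedCommutator

variable {B : Type} [AddCommGroup B] [Module ℂ B]

/-- `[x_λ y] = x *_λ y - φ(y) *_{-∂-λ} ψ(x)`; the sub-adjacent bracket is `φ = α⁻¹β`, `ψ = αβ⁻¹`. -/
noncomputable def twistedCommutator (D φ ψ : Module.End ℂ B) (f : CMap B B) : CMap B B :=
  f - ((f ∘ₗ φ).compl₂ ψ).flip.compr₂ (substNegD D)

variable {D φ ψ : Module.End ℂ B} {f : CMap B B}

lemma twistedCommutator_apply (x y : B) :
    twistedCommutator D φ ψ f x y = f x y - substNegD D (f (φ y) (ψ x)) := rfl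

lemma ev_twistedCommutator (l : ℂ) (x y : B) :
    ev (twistedCommutator D φ ψ f) l x y = ev f l x y - evD D f l (φ y) (ψ x) := by
  rw [ev_eq_evalAt, twistedCommutator_apply, map_sub, evalAt_substNegD (smul_one_comm D l),
    ← ev_eq_evalAt, evD_eq_evalAt]

lemma evD_twistedCommutator (l : ℂ) (x y : B) :
    evD D (twistedCommutator D φ ψ f) l x y = evD D f l x y - ev f l (φ y) (ψ x) := by
  rw [evD_eq_evalAt, twistedCommutator_apply, map_sub,
    evalAt_substNegD (neg_sub_smul_one_comm D l), sub_sub_cancel, ← evD_eq_evalAt, ev_eq_evalAt]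

lemma Sesq.twistedCommutator (hf : Sesq D D f) (hφ : φ ∘ₗ D = D ∘ₗ φ) (hψ : ψ ∘ₗ D = D ∘ₗ ψ) :
    Sesq D D (twistedCommutator D φ ψ f) := by
  constructor
  · intro l x y
    have hψx : ψ (D x) = D (ψ x) := LinearMap.congr_fun hψ x
    rw [ev_twistedCommutator, ev_twistedCommutator, hψx, hf.1, hf.evD_D_right, smul_sub]
  · intro l x y
    have hφy : φ (D y) = D (φ y) := LinearMap.congr_fun hφ y
    rw [ev_twistedCommutator, ev_twistedCommutator, hφy, hf.2, hf.evD_D_left, map_sub, smul_sub]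
    abel

lemma ev_twistedCommutator_skew {α β : Module.End ℂ B} (hφ : ∀ y, φ (α y) = β y)
    (hψ : ∀ x, ψ (β x) = α x) (l : ℂ) (x y : B) :
    ev (twistedCommutator D φ ψ f) l (β x) (α y)
      = -evD D (twistedCommutator D φ ψ f) l (β y) (α x) := by
  rw [ev_twistedCommutator, evD_twistedCommutator, hφ, hψ, hφ, hψ, neg_sub]

end TwistedCommutator

namespace PreLieData.IsPreLie

variable {B : Type} [AddCommGroup B] [Module ℂ B] {P : PreLieData B}

lemma evD_preLie (hP : P.IsPreLie) (l m : ℂ) (a b c : B) :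
    evD P.D P.mul l (evD P.D P.mul m (P.β a) (P.α b)) (P.β c)
        - evD P.D P.mul (l + m) (P.α (P.β a)) (ev P.mul m (P.α b) c)
      = evD P.D P.mul l (ev P.mul m (P.β b) (P.α a)) (P.β c)
        - ev P.mul m (P.α (P.β b)) (evD P.D P.mul l (P.α a) c) := by
  obtain ⟨-, -, -, hsesq, -, -, hpre⟩ := hP
  let Ψ := evalAt (m • 1) ∘ₗ P.mul (P.α (P.β b))
  -- the preLie identity at `(λ, m)` as an identity of λ-polynomials, to be evaluated at `-∂-l-m`
  have hfam : shiftBy m (P.mul (evD P.D P.mul m (P.β a) (P.α b)) (P.β c))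
        - P.mul (P.α (P.β a)) (ev P.mul m (P.α b) c)
      = shiftBy m (P.mul (ev P.mul m (P.β b) (P.α a)) (P.β c))
        - Finsupp.mapRange.linearMap Ψ (P.mul (P.α a) c) :=
    eq_of_forall_evalAt_smul_one fun t => by
      have key := hsesq.ev_evD_left m t (P.β a) (P.α b) (P.β c)
      have pre := hpre t m a b c
      rw [add_comm m t] at key
      rw [← key] at pre
      simp only [ev_eq_evalAt, evD_eq_evalAt, add_smul] at pre
      simp only [map_sub, evalAt_shiftBy, evalAt_mapRange (smul_one_comm Ψ t), ev_eq_evalAt,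
        evD_eq_evalAt]
      exact pre
  have hΨ : Ψ ∘ₗ (-P.D - l • 1) = (-P.D - (l + m) • 1) ∘ₗ Ψ := LinearMap.ext fun v => by
    simp only [Ψ, LinearMap.comp_apply, LinearMap.sub_apply, LinearMap.neg_apply, map_sub, map_neg,
      LinearMap.smul_apply, Module.End.one_apply, map_smul,
      hsesq.evalAt_D_right (smul_one_comm P.D m)]
    module
  have hT : -P.D - (l + m) • 1 + m • 1 = -P.D - l • (1 : Module.End ℂ B) := by
    rw [add_smul]; abel
  have h := congrArg (evalAt (-P.D - (l + m) • 1)) hfam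
  simp only [map_sub, evalAt_shiftBy, evalAt_mapRange hΨ, hT, ev_eq_evalAt, evD_eq_evalAt] at h
  simp only [ev_eq_evalAt, evD_eq_evalAt]
  exact h

lemma jacobi_of_ev_eq (hP : P.IsPreLie) {α' β' : Module.End ℂ B}
    (hα1 : α' ∘ₗ P.α = 1) (hα2 : P.α ∘ₗ α' = 1) (hβ1 : β' ∘ₗ P.β = 1) (hβ2 : P.β ∘ₗ β' = 1)
    {Q : CMap B B}
    (hQ : ∀ l x y, ev Q l x y = ev P.mul l x y - evD P.D P.mul l (α' (P.β y)) (P.α (β' x)))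
    (l μ : ℂ) (x y z : B) :
    ev Q l (P.α (P.β x)) (ev Q μ y z)
      = ev Q (l + μ) (ev Q l (P.β x) y) (P.β z) + ev Q μ (P.β y) (ev Q l (P.α x) z) := by
  have hsubst_l := hP.evD_preLie l μ (α' (α' (P.β z))) (α' y) (P.α (P.α (β' x)))
  have hsubst_μ := (hP.evD_preLie μ l (α' (α' (P.β z))) x (P.α (β' y))).symm
  rw [add_comm μ l] at hsubst_μ
  obtain ⟨hαD, hβD, hαβ, hsesq, hαmul, hβmul, hpre⟩ := hP
  have hpreLie := hpre l μ x (α' y) z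
  have hnestL := hsesq.ev_evD_left l μ (α' (P.β y)) (P.α x) (P.β z)
  have hnestR := hsesq.evD_evD_right l μ (α' (P.β (P.β z))) y (P.α (P.α (β' x)))
  have hα'mul := map_ev_of_inverse hαmul hα1 hα2
  have hβ'mul := map_ev_of_inverse hβmul hβ1 hβ2
  have hαmulD := map_evD_of_map_ev hαmul hαD
  have hβmulD := map_evD_of_map_ev hβmul hβD
  have hα'mulD := map_evD_of_map_ev hα'mul (comp_comm_of_inverse hα1 hα2 hαD)
  have hβ'mulD := map_evD_of_map_ev hβ'mul (comp_comm_of_inverse hβ1 hβ2 hβD)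
  have hαβ' := comp_comm_of_inverse hβ1 hβ2 hαβ.symm
  have hβα (b : B) : P.β (P.α b) = P.α (P.β b) := (LinearMap.congr_fun hαβ b).symm
  have hβα' (b : B) : P.β (α' b) = α' (P.β b) :=
    (LinearMap.congr_fun (comp_comm_of_inverse hα1 hα2 hαβ) b).symm
  have hβ'α (b : B) : β' (P.α b) = P.α (β' b) := LinearMap.congr_fun hαβ' b
  have hβ'α' (b : B) : β' (α' b) = α' (β' b) :=
    (LinearMap.congr_fun (comp_comm_of_inverse hα1 hα2 hαβ'.symm) b).symm
  simp only [hQ, map_sub, ev_sub_left, ev_sub_right, evD_sub_left, evD_sub_right, hαmul, hβmul,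
    hα'mul, hβ'mul, hαmulD, hβmulD, hα'mulD, hβ'mulD, hβα, hβα', hβ'α, hβ'α',
    apply_apply_of_comp_eq_one hα1, apply_apply_of_comp_eq_one hα2,
    apply_apply_of_comp_eq_one hβ1, apply_apply_of_comp_eq_one hβ2]
    at hpreLie hnestL hnestR hsubst_l hsubst_μ ⊢
  linear_combination (norm := module) -hpreLie + hnestL - hnestR + hsubst_l + hsubst_μ

lemma isLie_twistedCommutator (hP : P.IsPreLie) {α' β' : Module.End ℂ B}
    (hα1 : α' ∘ₗ P.α = 1) (hα2 : P.α ∘ₗ α' = 1) (hβ1 : β' ∘ₗ P.β = 1) (hβ2 : P.β ∘ₗ β' = 1) :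
    (LieData.mk P.D (twistedCommutator P.D (α' ∘ₗ P.β) (P.α ∘ₗ β') P.mul) P.α P.β).IsLie := by
  have hjacobi := hP.jacobi_of_ev_eq hα1 hα2 hβ1 hβ2
    (ev_twistedCommutator (D := P.D) (φ := α' ∘ₗ P.β) (ψ := P.α ∘ₗ β') (f := P.mul))
  obtain ⟨hαD, hβD, hαβ, hsesq, -, -, -⟩ := hP
  have hα'D : Commute α' P.D := comp_comm_of_inverse hα1 hα2 hαD
  have hβ'D : Commute β' P.D := comp_comm_of_inverse hβ1 hβ2 hβD
  refine ⟨hαD, hβD, hαβ, hsesq.twistedCommutator (hα'D.mul_left hβD).eq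
    ((Commute.mul_left hαD hβ'D).eq), ev_twistedCommutator_skew (fun y => ?_) (fun x => ?_),
    hjacobi⟩
  · rw [LinearMap.comp_apply, ← LinearMap.comp_apply P.β, ← hαβ, LinearMap.comp_apply,
      apply_apply_of_comp_eq_one hα1]
  · rw [LinearMap.comp_apply, apply_apply_of_comp_eq_one hβ1]

end PreLieData.IsPreLie

end ConfAlg

open ConfAlg in
/-- a regular BiHom-preLie conformal algebra gives rise to its
sub-adjacent BiHom-Lie conformal algebra via
`[x_λ y] = x *_λ y − α⁻¹β(y) *_{−∂−λ} αβ⁻¹(x)`. -/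
theorem stmt9 {B : Type} [AddCommGroup B] [Module ℂ B]
    (P : PreLieData B) (hP : P.IsPreLie)
    (α' β' : Module.End ℂ B)
    (hα1 : α' ∘ₗ P.α = 1) (hα2 : P.α ∘ₗ α' = 1)
    (hβ1 : β' ∘ₗ P.β = 1) (hβ2 : P.β ∘ₗ β' = 1) :
    ∃ Q : CMap B B,
      (∀ (l : ℂ) (x y : B),
        ev Q l x y = ev P.mul l x y - evD P.D P.mul l (α' (P.β y)) (P.α (β' x))) ∧
      (LieData.mk P.D Q P.α P.β).IsLie :=
  ⟨twistedCommutator P.D (α' ∘ₗ P.β) (P.α ∘ₗ β') P.mul, ev_twistedCommutator,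
    hP.isLie_twistedCommutator hα1 hα2 hβ1 hβ2⟩
end
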